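/- arXiv:2201.02587 — 6 statements merged into one kernel-verified Lean document; each statement's English description precedes it below -/
import Mathlib

section
/- Let (ξ_i)_{i ≥ 1} be a sequence of independent, identically distributed ℝ^n-valued random vectors and let h : ℝ^d × ℝ^n → ℝ be a measurable function such that (i) almost surely, the map θ ∈ ℝ^d ↦ h(θ, ξ_1) is continuous, and (ii) for all C > 0, E[sup_{|θ| ≤ C} |h(θ, ξ_1)|] < ∞. Then the function θ ↦ E[h(θ, ξ_1)] is continuous on ℝ^d and, almost surely, for every C > 0, sup_{|θ| ≤ C} |(1/n) Σ_{i=1}^n h(θ, ξ_i) − E[h(θ, ξ_1)]| → 0 as n → ∞. -/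
/-!
For a compact parameter space `K`, restriction to a countable dense `s ⊆ K` is a continuous
injection of the Polish space `C(K, ℝ)` into `s → ℝ`, hence a Borel embedding; inverting it yields
a Borel map `G : ℝⁿ → C(K, ℝ)` with `G x = h (·) x` whenever `h (·) x` is continuous.
Continuity of `h (·) (ξ i)` need not be an event, but the exceptional set
`{x | ∃ θ, G x θ ≠ h θ x}` is the projection of a Borel set, hence analytic, hence measurable for
the completion of any finite measure (analytic sets are inner regular for compact sets). It is
null for the law of `ξ 0`, so also for the law of every `ξ i`: almost surely all the `G (ξ i)`
represent `h (·) (ξ i)`. The uniform law on `K` is then Etemadi's strong law of large numbers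
for the i.i.d. `C(K, ℝ)`-valued variables `G ∘ ξ i`, whose norms are integrable by assumption;
balls of integer radius exhaust `ℝᵈ`.
-/

open MeasureTheory ProbabilityTheory Filter Set Topology
open scoped ENNReal

section Capacitability

variable {α : Type*} [MeasurableSpace α] (μ : Measure α)

lemma Monotone.exists_measure_iUnion_lt_add {s : ℕ → Set α} (hs : Monotone s)
    (hfin : μ (⋃ k, s k) ≠ ∞) {δ : ℝ≥0∞} (hδ : δ ≠ 0) : ∃ k, μ (⋃ k, s k) < μ (s k) + δ :=
  (((tendsto_measure_iUnion_atTop hs).add_const δ).eventually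
    (lt_mem_nhds (ENNReal.lt_add_right hfin hδ))).exists

/-- The bound `σ k` is chosen recursively, losing at most `δ k` of the measure of the image at
step `k`; the losses sum to less than `ε`. -/
lemma exists_measure_range_le_measure_image_prefix_add [IsFiniteMeasure μ] (f : (ℕ → ℕ) → α)
    {ε : ℝ≥0∞} (hε : ε ≠ 0) :
    ∃ σ : ℕ → ℕ, ∀ k, μ (range f) ≤ μ (f '' {x | ∀ i < k, x i ≤ σ i}) + ε := by
  obtain ⟨δ, hδ_pos, hδ_sum⟩ := ENNReal.exists_pos_sum_of_countable hε ℕ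
  have step (s : Set (ℕ → ℕ)) (k : ℕ) :
      ∃ m, μ (f '' s) ≤ μ (f '' (s ∩ {x | x k ≤ m})) + δ k := by
    have hmono : Monotone fun m => f '' (s ∩ {x | x k ≤ m}) :=
      fun m m' hm => image_mono (inter_subset_inter_right _ fun x hx => le_trans hx hm)
    have hunion : ⋃ m, f '' (s ∩ {x | x k ≤ m}) = f '' s := by
      rw [← image_iUnion, ← inter_iUnion,
        iUnion_eq_univ_iff.2 fun x => ⟨x k, show x k ≤ x k from le_rfl⟩, inter_univ]
    obtain ⟨m, hm⟩ := hmono.exists_measure_iUnion_lt_add μ (measure_ne_top _ _)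
      (ENNReal.coe_ne_zero.2 (hδ_pos k).ne')
    exact ⟨m, hunion ▸ hm.le⟩
  let A : ℕ → Set (ℕ → ℕ) := fun k =>
    Nat.rec univ (fun k A => A ∩ {x | x k ≤ Classical.choose (step A k)}) k
  let σ : ℕ → ℕ := fun k => Classical.choose (step (A k) k)
  have hA (k : ℕ) : A k = {x | ∀ i < k, x i ≤ σ i} := by
    induction k with
    | zero => simp [A]
    | succ k ih =>
      show A k ∩ {x | x k ≤ σ k} = _
      ext x
      simp only [ih, mem_inter_iff, mem_ofPred_eq]
      exact Nat.forall_lt_succ_right.symm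
  have hloss (k : ℕ) : μ (range f) ≤ μ (f '' A k) + ∑ i ∈ Finset.range k, (δ i : ℝ≥0∞) := by
    induction k with
    | zero => simp [A]
    | succ k ih =>
      calc μ (range f) ≤ μ (f '' A k) + ∑ i ∈ Finset.range k, (δ i : ℝ≥0∞) := ih
        _ ≤ μ (f '' A (k + 1)) + δ k + ∑ i ∈ Finset.range k, (δ i : ℝ≥0∞) := by
          gcongr; exact Classical.choose_spec (step (A k) k)
        _ = μ (f '' A (k + 1)) + ∑ i ∈ Finset.range (k + 1), (δ i : ℝ≥0∞) := by
          rw [Finset.sum_range_succ, add_assoc, add_comm (δ k : ℝ≥0∞)]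
  refine ⟨σ, fun k => (hloss k).trans ?_⟩
  rw [hA k]
  gcongr
  exact (ENNReal.sum_le_tsum _).trans hδ_sum.le

end Capacitability

lemma isCompact_Iic_pi_nat {ι : Type*} (σ : ι → ℕ) : IsCompact (Iic σ) :=
  Icc_bot (a := σ) ▸ isCompact_Icc

lemma iInter_closure_image_prefix_subset_image_Iic {α : Type*} [MetricSpace α]
    {f : (ℕ → ℕ) → α} (hf : Continuous f) (σ : ℕ → ℕ) :
    ⋂ k, closure (f '' {x | ∀ i < k, x i ≤ σ i}) ⊆ f '' Iic σ := by
  intro y hy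
  have hclose (k : ℕ) : ∃ x, (∀ i < k, x i ≤ σ i) ∧ dist (f x) y < 1 / (k + 1) := by
    obtain ⟨_, ⟨x, hx, rfl⟩, hxy⟩ :=
      Metric.mem_closure_iff.1 (mem_iInter.1 hy k) (1 / (k + 1)) Nat.one_div_pos_of_nat
    exact ⟨x, hx, by rwa [dist_comm]⟩
  choose x hx_le hx_dist using hclose
  -- Clamping `x k` into `Iic σ` changes only coordinates `≥ k`.
  obtain ⟨a, ha, φ, hφ, hlim⟩ := (isCompact_Iic_pi_nat σ).tendsto_subseq
    (x := fun k i => min (x k i) (σ i)) fun k i => min_le_right _ _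
  have hx_lim : Tendsto (fun j => x (φ j)) atTop (𝓝 a) := by
    refine tendsto_pi_nhds.2 fun i => ((continuous_apply i).tendsto a |>.comp hlim).congr' ?_
    filter_upwards [hφ.tendsto_atTop.eventually_gt_atTop i] with j hj
    exact min_eq_left (hx_le (φ j) i hj)
  refine ⟨a, ha, tendsto_nhds_unique ((hf.tendsto a).comp hx_lim) ?_⟩
  refine tendsto_iff_dist_tendsto_zero.2 (squeeze_zero (fun _ => dist_nonneg)
    (fun j => (hx_dist (φ j)).le) ?_)
  exact tendsto_one_div_add_atTop_nhds_zero_nat.comp hφ.tendsto_atTop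

section AnalyticSet

variable {α : Type*} [TopologicalSpace α] [TopologicalSpace.MetrizableSpace α]
  [MeasurableSpace α] [OpensMeasurableSpace α] (μ : Measure α) [IsFiniteMeasure μ] {s : Set α}

theorem MeasureTheory.AnalyticSet.exists_isCompact_subset_measure_le_add (hs : AnalyticSet s)
    {ε : ℝ≥0∞} (hε : ε ≠ 0) : ∃ K ⊆ s, IsCompact K ∧ μ s ≤ μ K + ε := by
  let := TopologicalSpace.metrizableSpaceMetric α
  rw [AnalyticSet_def] at hs
  rcases hs with rfl | ⟨f, hf, rfl⟩
  · exact ⟨∅, subset_rfl, isCompact_empty, by simp⟩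
  obtain ⟨σ, hσ⟩ := exists_measure_range_le_measure_image_prefix_add μ f hε
  refine ⟨f '' Iic σ, image_subset_range _ _, (isCompact_Iic_pi_nat σ).image hf, ?_⟩
  have hlim := tendsto_measure_iInter_atTop (μ := μ)
    (s := fun k => closure (f '' {x | ∀ i < k, x i ≤ σ i}))
    (fun k => isClosed_closure.nullMeasurableSet)
    (fun k k' hk => closure_mono (image_mono fun x hx i hi => hx i (hi.trans_le hk)))
    ⟨0, measure_ne_top μ _⟩
  calc μ (range f) ≤ μ (⋂ k, closure (f '' {x | ∀ i < k, x i ≤ σ i})) + ε :=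
        ge_of_tendsto' (hlim.add_const ε) fun k => (hσ k).trans
          (add_le_add_left (measure_mono subset_closure) ε)
    _ ≤ μ (f '' Iic σ) + ε := by
        gcongr; exact iInter_closure_image_prefix_subset_image_Iic hf σ

theorem MeasureTheory.AnalyticSet.nullMeasurableSet (hs : AnalyticSet s) :
    NullMeasurableSet s μ := by
  choose K hKs hK hμK using fun m : ℕ => hs.exists_isCompact_subset_measure_le_add μ
    (ENNReal.inv_ne_zero.2 (ENNReal.natCast_ne_top m))
  have hB : MeasurableSet (⋃ m, K m) := MeasurableSet.iUnion fun m => (hK m).measurableSet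
  have hμ : μ s ≤ μ (⋃ m, K m) := by
    refine ge_of_tendsto'
      (by simpa using ENNReal.tendsto_inv_nat_nhds_zero.const_add (μ (⋃ m, K m)))
      fun m => (hμK m).trans ?_
    gcongr
    exact subset_iUnion K m
  exact hB.nullMeasurableSet.congr (ae_eq_of_subset_of_measure_ge (iUnion_subset hKs) hμ
    hB.nullMeasurableSet (measure_ne_top _ _))

end AnalyticSet

theorem MeasurableSet.nullMeasurableSet_setOf_forall {K X : Type*} [MeasurableSpace K]
    [StandardBorelSpace K] [TopologicalSpace X] [PolishSpace X] [MeasurableSpace X]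
    [BorelSpace X] (ν : Measure X) [IsFiniteMeasure ν] {p : K → X → Prop}
    (hp : MeasurableSet {q : K × X | p q.1 q.2}) : NullMeasurableSet {x | ∀ θ, p θ x} ν := by
  have : {x | ∀ θ, p θ x} = (Prod.snd '' {q : K × X | ¬ p q.1 q.2})ᶜ := by
    ext x; simp
  rw [this]
  exact ((hp.compl.analyticSet_image measurable_snd).nullMeasurableSet ν).compl

theorem ProbabilityTheory.IdentDistrib.ae_snd₀ {Ω Ω' β : Type*} [MeasurableSpace Ω]
    [MeasurableSpace Ω'] [MeasurableSpace β] {μ : Measure Ω} {ν : Measure Ω'} {f : Ω → β}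
    {g : Ω' → β} (h : IdentDistrib f g μ ν) {p : β → Prop}
    (hp : NullMeasurableSet {x | p x} (μ.map f)) (hf : ∀ᵐ ω ∂μ, p (f ω)) :
    ∀ᵐ ω ∂ν, p (g ω) := by
  have hmap : ∀ᵐ x ∂μ.map f, p x := by
    rw [ae_iff, ← compl_ofPred, Measure.map_apply₀ h.aemeasurable_fst hp.compl]
    exact ae_iff.1 hf
  rw [h.map_eq] at hmap
  exact ae_of_ae_map h.aemeasurable_snd hmap

theorem ContinuousMap.exists_measurable_eq_mk_of_continuous {K X : Type*} [MetricSpace K]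
    [CompactSpace K] [MeasurableSpace X] [MeasurableSpace C(K, ℝ)] [BorelSpace C(K, ℝ)]
    (f : K → X → ℝ) (hf : ∀ θ, Measurable (f θ)) :
    ∃ G : X → C(K, ℝ), Measurable G ∧
      ∀ x (hx : Continuous fun θ => f θ x), G x = ⟨fun θ => f θ x, hx⟩ := by
  obtain ⟨s, hs_count, hs_dense⟩ := TopologicalSpace.exists_countable_dense K
  have : Countable s := hs_count.to_subtype
  have hrestrict : MeasurableEmbedding fun (g : C(K, ℝ)) (θ : s) => g θ :=
    Continuous.measurableEmbedding (by fun_prop) fun g₁ g₂ hg => ContinuousMap.coe_injective <|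
      Continuous.ext_on hs_dense g₁.continuous g₂.continuous fun θ hθ => congrFun hg ⟨θ, hθ⟩
  obtain ⟨G, hG, hGr⟩ := hrestrict.exists_measurable_extend measurable_id fun _ => ⟨0⟩
  refine ⟨fun x => G fun θ => f θ x, hG.comp (measurable_pi_lambda _ fun θ => hf θ), ?_⟩
  intro x hx
  exact congrFun hGr ⟨fun θ => f θ x, hx⟩

theorem TendstoUniformlyOn.tendsto_iSup_abs_sub {ι α : Type*} {F : ι → α → ℝ} {f : α → ℝ}
    {l : Filter ι} {s : Set α} (h : TendstoUniformlyOn F f l s) :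
    Tendsto (fun i => ⨆ x : s, |F i x - f x|) l (𝓝 0) := by
  refine Metric.tendsto_nhds.2 fun ε hε => ?_
  filter_upwards [Metric.tendstoUniformlyOn_iff.1 h (ε / 2) (half_pos hε)] with i hi
  have hle : ⨆ x : s, |F i x - f x| ≤ ε / 2 :=
    Real.iSup_le (fun x => by rw [abs_sub_comm]; exact (hi x x.2).le) (half_pos hε).le
  rw [Real.dist_0_eq_abs, abs_of_nonneg (Real.iSup_nonneg fun _ => abs_nonneg _)]
  linarith

theorem uniform_strong_law_of_compactSpace {Ω K X : Type*} [MeasurableSpace Ω]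
    {μ : Measure Ω} [IsFiniteMeasure μ] [MetricSpace K] [CompactSpace K] [MeasurableSpace K]
    [BorelSpace K] [TopologicalSpace X] [PolishSpace X] [MeasurableSpace X] [BorelSpace X]
    (ξ : ℕ → Ω → X) (hindep : Pairwise (Function.onFun (IndepFun · · μ) ξ))
    (hident : ∀ i, IdentDistrib (ξ i) (ξ 0) μ μ) (f : K → X → ℝ)
    (hf : Measurable fun q : K × X => f q.1 q.2)
    (hcont : ∀ᵐ ω ∂μ, Continuous fun θ => f θ (ξ 0 ω))
    (hint : Integrable (fun ω => ⨆ θ, |f θ (ξ 0 ω)|) μ) :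
    Continuous (fun θ => ∫ ω, f θ (ξ 0 ω) ∂μ) ∧
    ∀ᵐ ω ∂μ, TendstoUniformly (fun (M : ℕ) θ => (M : ℝ)⁻¹ * ∑ i ∈ Finset.range M, f θ (ξ i ω))
      (fun θ => ∫ ω, f θ (ξ 0 ω) ∂μ) atTop := by
  borelize C(K, ℝ)
  obtain ⟨G, hG, hGf⟩ :=
    ContinuousMap.exists_measurable_eq_mk_of_continuous f fun θ => hf.comp measurable_prodMk_left
  have hG0 : ∀ᵐ ω ∂μ, ∀ θ, G (ξ 0 ω) θ = f θ (ξ 0 ω) :=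
    hcont.mono fun ω hω θ => by rw [hGf _ hω]; rfl
  have hGi (i : ℕ) : ∀ᵐ ω ∂μ, ∀ θ, G (ξ i ω) θ = f θ (ξ i ω) := by
    refine (hident i).symm.ae_snd₀ (p := fun x => ∀ θ, G x θ = f θ x)
      (MeasurableSet.nullMeasurableSet_setOf_forall _ ?_) hG0
    exact measurableSet_eq_fun
      (continuous_eval.measurable.comp ((hG.comp measurable_snd).prodMk measurable_fst)) hf
  have hint_G : Integrable (fun ω => G (ξ 0 ω)) μ := by
    refine (integrable_norm_iff
      (hG.comp_aemeasurable (hident 0).aemeasurable_fst).aestronglyMeasurable).1 (hint.congr ?_)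
    filter_upwards [hG0] with ω hω
    simp only [ContinuousMap.norm_eq_iSup_norm, Function.comp_apply, hω, Real.norm_eq_abs]
  have hmean (θ : K) : (∫ ω, G (ξ 0 ω) ∂μ) θ = ∫ ω, f θ (ξ 0 ω) ∂μ := by
    rw [ContinuousMap.integral_apply hint_G]
    exact integral_congr_ae (hG0.mono fun ω hω => hω θ)
  have hslln := strong_law_ae (fun i ω => G (ξ i ω)) hint_G
    (fun i j hij => (hindep hij).comp hG hG) fun i => (hident i).comp hG
  refine ⟨by simpa only [← hmean] using ContinuousMap.continuous _, ?_⟩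
  filter_upwards [hslln, ae_all_iff.2 hGi] with ω hω hωG
  simpa [← hmean, hωG] using ContinuousMap.tendsto_iff_tendstoUniformly.1 hω

/-- Uniform strong law of large numbers: if `(ξ_i)` is i.i.d., `θ ↦ h(θ, ξ_1)` is a.s.
continuous, and `E[sup_{|θ| ≤ C} |h(θ, ξ_1)|] < ∞` for all `C > 0`, then
`θ ↦ E[h(θ, ξ_1)]` is continuous and, a.s., for every `C > 0`,
`sup_{|θ| ≤ C} |(1/n) Σ_{i=1}^n h(θ, ξ_i) − E[h(θ, ξ_1)]| → 0`. -/
theorem uniform_strong_law_of_large_numbers {Ω : Type*} [MeasurableSpace Ω]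
    (μ : Measure Ω) [IsProbabilityMeasure μ]
    {d n : ℕ} (ξ : ℕ → Ω → (Fin n → ℝ))
    (hξmeas : ∀ i, Measurable (ξ i))
    (hξindep : iIndepFun ξ μ)
    (hξident : ∀ i, Measure.map (ξ i) μ = Measure.map (ξ 0) μ)
    (h : EuclideanSpace ℝ (Fin d) → (Fin n → ℝ) → ℝ)
    (hmeas : Measurable fun p : EuclideanSpace ℝ (Fin d) × (Fin n → ℝ) => h p.1 p.2)
    (hcont : ∀ᵐ ω ∂μ, Continuous fun θ => h θ (ξ 0 ω))
    (hint : ∀ C > (0 : ℝ), Integrable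
      (fun ω => ⨆ θ : Metric.closedBall (0 : EuclideanSpace ℝ (Fin d)) C, |h θ (ξ 0 ω)|) μ) :
    Continuous (fun θ => ∫ ω, h θ (ξ 0 ω) ∂μ) ∧
    ∀ᵐ ω ∂μ, ∀ C > (0 : ℝ),
      Tendsto (fun M : ℕ => ⨆ θ : Metric.closedBall (0 : EuclideanSpace ℝ (Fin d)) C,
          |(M : ℝ)⁻¹ * ∑ i ∈ Finset.range M, h θ (ξ i ω) - ∫ ω', h θ (ξ 0 ω') ∂μ|)
        atTop (nhds 0) := by
  have hball (C : ℝ) (hC : 0 < C) :=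
    uniform_strong_law_of_compactSpace (K := Metric.closedBall (0 : EuclideanSpace ℝ (Fin d)) C)
      ξ (fun i j hij => hξindep.indepFun hij)
      (fun i => ⟨(hξmeas i).aemeasurable, (hξmeas 0).aemeasurable, hξident i⟩)
      (fun θ x => h θ x) (hmeas.comp (measurable_subtype_coe.prodMap measurable_id))
      (hcont.mono fun ω hω => hω.comp continuous_subtype_val) (hint C hC)
  constructor
  · refine continuous_iff_continuousAt.2 fun θ => ?_
    have hθ : θ ∈ Metric.ball (0 : EuclideanSpace ℝ (Fin d)) (‖θ‖ + 1) := by simp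
    exact ((continuousOn_iff_continuous_domRestrict.2 (hball _ (by positivity)).1).continuousAt
      (Metric.closedBall_mem_nhds_of_mem hθ))
  · filter_upwards [ae_all_iff.2 fun k : ℕ => (hball (k + 1) k.cast_add_one_pos).2] with ω hω C _
    obtain ⟨k, hk⟩ := exists_nat_ge C
    have hunif : TendstoUniformlyOn
        (fun (M : ℕ) θ => (M : ℝ)⁻¹ * ∑ i ∈ Finset.range M, h θ (ξ i ω))
        (fun θ => ∫ ω', h θ (ξ 0 ω') ∂μ) atTop (Metric.closedBall 0 (k + 1)) :=
      tendstoUniformlyOn_iff_tendstoUniformly_comp_coe.2 (hω k)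
    exact (hunif.mono (Metric.closedBall_subset_closedBall (by linarith))).tendsto_iSup_abs_sub
end

section
/- Let N ≥ 1 and let φ = (φ_1, …, φ_{N−1}) and ψ = (ψ_1, …, ψ_{N−1}) be two families of functions from [0,1]^d to ℝ. Then for every j = 1, …, N−1 and every z = (z_1, …, z_N) ∈ ℝ^N and x = (x_1, …, x_N) ∈ ([0,1]^d)^N, |F_j^φ(z, x) − F_j^ψ(z, x)| ≤ (Σ_{i=j}^N |z_i|) · (Σ_{i=j}^{N−1} 1{|z_i − ψ_i(x_i)| ≤ |φ_i(x_i) − ψ_i(x_i)|}). -/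
/-- The stopped payoff `F_j^φ(z, x)` defined by the backward recursion
`F_N^φ(z, x) = z N` and, for `j < N`,
`F_j^φ(z, x) = z j` if `z j ≥ φ j (x j)` and `F_{j+1}^φ(z, x)` otherwise. -/
noncomputable def stoppedValue {α : Type*} (N : ℕ) (φ : ℕ → α → ℝ) (z : ℕ → ℝ) (x : ℕ → α) :
    ℕ → ℝ := fun j =>
  Nat.rec (z N)
    (fun k ih =>
      if φ (N - (k + 1)) (x (N - (k + 1))) ≤ z (N - (k + 1)) then z (N - (k + 1)) else ih)
    (N - j)

lemma stoppedValue_top {α : Type*} (N : ℕ) (φ : ℕ → α → ℝ) (z : ℕ → ℝ) (x : ℕ → α) :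
    stoppedValue N φ z x N = z N := by
  simp [stoppedValue]

lemma stoppedValue_of_lt {α : Type*} (N : ℕ) (φ : ℕ → α → ℝ) (z : ℕ → ℝ) (x : ℕ → α)
    {j : ℕ} (hj : j < N) :
    stoppedValue N φ z x j =
      if φ j (x j) ≤ z j then z j else stoppedValue N φ z x (j + 1) := by
  have h1 : N - j = (N - (j + 1)) + 1 := by omega
  have h2 : N - (N - (j + 1) + 1) = j := by omega
  unfold stoppedValue
  rw [h1]
  show (if φ (N - (N - (j+1) + 1)) (x (N - (N - (j+1) + 1))) ≤ z (N - (N - (j+1) + 1))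
    then z (N - (N - (j+1) + 1)) else _) = _
  rw [h2]

lemma stoppedValue_mem {α : Type*} (N : ℕ) (φ : ℕ → α → ℝ) (z : ℕ → ℝ) (x : ℕ → α) :
    ∀ m j, N - j = m → j ≤ N → ∃ a, j ≤ a ∧ a ≤ N ∧ stoppedValue N φ z x j = z a := by
  intro m
  induction m with
  | zero =>
    intro j h1 h2
    rw [show j = N from by omega]
    exact ⟨N, le_rfl, le_rfl, stoppedValue_top N φ z x⟩
  | succ m ih =>
    intro j h1 h2
    have hj : j < N := by omega
    rw [stoppedValue_of_lt N φ z x hj]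
    by_cases h : φ j (x j) ≤ z j
    · exact ⟨j, le_rfl, hj.le, by simp [h]⟩
    · obtain ⟨a, ha1, ha2, ha3⟩ := ih (j + 1) (by omega) (by omega)
      exact ⟨a, by omega, ha2, by simp [h, ha3]⟩

/-- For two families `φ, ψ` of functions from `[0,1]^d` to `ℝ`, for every `1 ≤ j ≤ N − 1`,
`|F_j^φ(z, x) − F_j^ψ(z, x)| ≤ (Σ_{i=j}^N |z_i|) · (Σ_{i=j}^{N−1} 1{|z_i − ψ_i(x_i)| ≤ |φ_i(x_i) − ψ_i(x_i)|})`. -/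
theorem abs_stoppedValue_sub_stoppedValue_le {d : ℕ} (N : ℕ) (hN : 1 ≤ N)
    (φ ψ : ℕ → (Fin d → ℝ) → ℝ) (z : ℕ → ℝ) (x : ℕ → (Fin d → ℝ))
    (hx : ∀ i, x i ∈ Set.Icc (0 : Fin d → ℝ) 1) :
    ∀ j, 1 ≤ j → j ≤ N - 1 →
      |stoppedValue N φ z x j - stoppedValue N ψ z x j| ≤
        (∑ i ∈ Finset.Icc j N, |z i|) *
          (∑ i ∈ Finset.Icc j (N - 1),
            if |z i - ψ i (x i)| ≤ |φ i (x i) - ψ i (x i)| then (1 : ℝ) else 0) := by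
  -- notation
  set A : ℕ → ℝ := fun j => ∑ i ∈ Finset.Icc j N, |z i| with hA
  set B : ℕ → ℝ := fun j => ∑ i ∈ Finset.Icc j (N - 1),
      if |z i - ψ i (x i)| ≤ |φ i (x i) - ψ i (x i)| then (1 : ℝ) else 0 with hB
  have hA0 : ∀ j, 0 ≤ A j := fun j => Finset.sum_nonneg fun i _ => abs_nonneg _
  have hB0 : ∀ j, 0 ≤ B j := fun j => Finset.sum_nonneg fun i _ => by positivity
  have hAmono : ∀ j, A (j + 1) ≤ A j := by
    intro j
    apply Finset.sum_le_sum_of_subset_of_nonneg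
    · intro i hi; simp only [Finset.mem_Icc] at *; omega
    · exact fun i _ _ => abs_nonneg _
  have hBmono : ∀ j, B (j + 1) ≤ B j := by
    intro j
    apply Finset.sum_le_sum_of_subset_of_nonneg
    · intro i hi; simp only [Finset.mem_Icc] at *; omega
    · intro i _ _; positivity
  -- if decisions disagree at j, the indicator at j is 1, hence B j ≥ 1
  have hB1 : ∀ j, j ≤ N - 1 → |z j - ψ j (x j)| ≤ |φ j (x j) - ψ j (x j)| → (1 : ℝ) ≤ B j := by
    intro j hj hcond
    have : ((if |z j - ψ j (x j)| ≤ |φ j (x j) - ψ j (x j)| then (1 : ℝ) else 0)) ≤ B j := by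
      apply Finset.single_le_sum (f := fun i =>
        if |z i - ψ i (x i)| ≤ |φ i (x i) - ψ i (x i)| then (1 : ℝ) else 0)
      · intro i _; positivity
      · simp only [Finset.mem_Icc]; omega
    simpa [hcond] using this
  -- |z j| + |z a| ≤ A j for j < a ≤ N
  have hA2 : ∀ j a, j < a → a ≤ N → |z j| + |z a| ≤ A j := by
    intro j a hja haN
    have hsub : ({j, a} : Finset ℕ) ⊆ Finset.Icc j N := by
      intro i hi; simp only [Finset.mem_insert, Finset.mem_singleton, Finset.mem_Icc] at *; omega
    calc |z j| + |z a| = ∑ i ∈ ({j, a} : Finset ℕ), |z i| := by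
          rw [Finset.sum_pair (by omega)]
      _ ≤ A j := Finset.sum_le_sum_of_subset_of_nonneg hsub fun i _ _ => abs_nonneg _
  -- disagreement bound
  have hdis : ∀ j a, j ≤ N - 1 → j < a → a ≤ N →
      |z j - ψ j (x j)| ≤ |φ j (x j) - ψ j (x j)| → |z j - z a| ≤ A j * B j := by
    intro j a hj hja haN hcond
    calc |z j - z a| ≤ |z j| + |z a| := abs_sub _ _
      _ ≤ A j := hA2 j a hja haN
      _ = A j * 1 := (mul_one _).symm
      _ ≤ A j * B j := by
          exact mul_le_mul_of_nonneg_left (hB1 j hj hcond) (hA0 j)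
  -- the condition holds whenever decisions disagree
  have hcond1 : ∀ j, φ j (x j) ≤ z j → ¬ ψ j (x j) ≤ z j →
      |z j - ψ j (x j)| ≤ |φ j (x j) - ψ j (x j)| := by
    intro j h1 h2
    push_neg at h2
    rw [abs_of_nonpos (by linarith), neg_sub]
    calc ψ j (x j) - z j ≤ ψ j (x j) - φ j (x j) := by linarith
      _ ≤ |φ j (x j) - ψ j (x j)| := by rw [abs_sub_comm]; exact le_abs_self _
  have hcond2 : ∀ j, ¬ φ j (x j) ≤ z j → ψ j (x j) ≤ z j →
      |z j - ψ j (x j)| ≤ |φ j (x j) - ψ j (x j)| := by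
    intro j h1 h2
    push_neg at h1
    rw [abs_of_nonneg (by linarith)]
    calc z j - ψ j (x j) ≤ φ j (x j) - ψ j (x j) := by linarith
      _ ≤ |φ j (x j) - ψ j (x j)| := le_abs_self _
  suffices H : ∀ m j, N - 1 - j = m → j ≤ N - 1 →
      |stoppedValue N φ z x j - stoppedValue N ψ z x j| ≤ A j * B j by
    intro j _ hj2; exact H _ j rfl hj2
  intro m
  induction m with
  | zero =>
    intro j h1 h2
    have hjN : j < N := by omega
    have hjN' : j + 1 = N := by omega
    rw [stoppedValue_of_lt N φ z x hjN, stoppedValue_of_lt N ψ z x hjN, hjN',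
      stoppedValue_top, stoppedValue_top]
    by_cases hφ : φ j (x j) ≤ z j <;> by_cases hψ : ψ j (x j) ≤ z j <;>
      simp only [hφ, hψ, if_true, if_false, if_pos, if_neg, not_false_iff]
    · simpa using mul_nonneg (hA0 j) (hB0 j)
    · exact hdis j N h2 (by omega) le_rfl (hcond1 j hφ hψ)
    · rw [abs_sub_comm]; exact hdis j N h2 (by omega) le_rfl (hcond2 j hφ hψ)
    · simpa using mul_nonneg (hA0 j) (hB0 j)
  | succ m ih =>
    intro j h1 h2
    have hjN : j < N := by omega
    rw [stoppedValue_of_lt N φ z x hjN, stoppedValue_of_lt N ψ z x hjN]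
    obtain ⟨aφ, haφ1, haφ2, haφ3⟩ := stoppedValue_mem N φ z x (N - (j + 1)) (j + 1) rfl (by omega)
    obtain ⟨aψ, haψ1, haψ2, haψ3⟩ := stoppedValue_mem N ψ z x (N - (j + 1)) (j + 1) rfl (by omega)
    by_cases hφ : φ j (x j) ≤ z j <;> by_cases hψ : ψ j (x j) ≤ z j <;>
      simp only [hφ, hψ, if_true, if_false, if_pos, if_neg, not_false_iff]
    · simpa using mul_nonneg (hA0 j) (hB0 j)
    · rw [haψ3]; exact hdis j aψ h2 (by omega) haψ2 (hcond1 j hφ hψ)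
    · rw [haφ3, abs_sub_comm]; exact hdis j aφ h2 (by omega) haφ2 (hcond2 j hφ hψ)
    · calc |stoppedValue N φ z x (j+1) - stoppedValue N ψ z x (j+1)| ≤ A (j+1) * B (j+1) :=
            ih (j + 1) (by omega) (by omega)
        _ ≤ A j * B j := mul_le_mul (hAmono j) (hBmono j) (hB0 _) (hA0 _)
end

section
/- Let X be a random variable with values in [0,1]^d admitting a density with respect to the Lebesgue measure on [0,1]^d, and let Z be a real-valued square-integrable random variable. For a ∈ [0,1]^d write B_a = Π_{j=1}^d [0, a(j)). Then the function ν : ℝ × ℝ × [0,1]^d → ℝ defined by ν(α, β, a) = E[(Z − α·1{X ∈ B_a} − β·1{X ∉ B_a})²] is continuous. -/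
/-!
For fixed data `x`, the loss is continuous in `(α, β)` and depends on `a` only through whether
`x ∈ B_a`, which is locally constant in `a` unless some coordinate `x j` equals `a j`. Those
hyperplanes are Lebesgue-null, hence `P`-null for `X` by absolute continuity, so the loss is
a.s. continuous at every parameter. Near a parameter it is dominated by `2 Z² + const`, which is
integrable, and dominated convergence gives continuity of the expectation (on all of
`ℝ × ℝ × ℝ^d`).
-/

open MeasureTheory

/-- The squared loss `(z − α·1{x ∈ B_a} − β·1{x ∉ B_a})²`, where
`B_a = Π_j [0, a(j))`, as a function of the data `(x, z)` and parameters `(α, β, a)`. -/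
noncomputable def treeLoss {d : ℕ} (x : Fin d → ℝ) (z : ℝ) (p : ℝ × ℝ × (Fin d → ℝ)) : ℝ :=
  (z - p.1 * (Set.univ.pi fun j => Set.Ico (0 : ℝ) (p.2.2 j)).indicator (fun _ => (1 : ℝ)) x
     - p.2.1 * ((Set.univ.pi fun j => Set.Ico (0 : ℝ) (p.2.2 j))ᶜ.indicator
        (fun _ => (1 : ℝ)) x)) ^ 2

open Filter Topology Set

lemma eventually_mem_pi_Ico_iff {ι : Type*} [Finite ι] {x a : ι → ℝ} (hx : ∀ j, x j ≠ a j) :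
    ∀ᶠ b in 𝓝 a, (x ∈ univ.pi (fun j => Ico 0 (b j)) ↔ x ∈ univ.pi fun j => Ico 0 (a j)) := by
  have hcoord : ∀ j, ∀ᶠ b in 𝓝 a, (x j < b j ↔ x j < a j) := fun j => by
    have hj : Tendsto (fun b : ι → ℝ => b j) (𝓝 a) (𝓝 (a j)) := (continuous_apply j).tendsto a
    rcases (hx j).lt_or_gt with h | h
    · filter_upwards [hj.eventually_const_lt h] with b hb using iff_of_true hb h
    · filter_upwards [hj.eventually_lt_const h] with b hb using
        iff_of_false hb.le.not_gt h.le.not_gt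
  filter_upwards [eventually_all.2 hcoord] with b hb
  simp only [mem_univ_pi, mem_Ico, hb]

lemma ae_forall_apply_ne {ι : Type*} [Fintype ι] (a : ι → ℝ) :
    ∀ᵐ x : ι → ℝ, ∀ j, x j ≠ a j := by
  rw [volume_pi]
  exact ae_all_iff.2 fun j => Measure.ae_eval_ne (α := fun _ : ι => ℝ) (fun _ => volume) j (a j)

namespace treeLoss

variable {d : ℕ}

lemma norm_le (x : Fin d → ℝ) (z : ℝ) (p : ℝ × ℝ × (Fin d → ℝ)) :
    ‖treeLoss x z p‖ ≤ 2 * z ^ 2 + 2 * (p.1 ^ 2 + p.2.1 ^ 2) := by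
  rw [treeLoss, Real.norm_of_nonneg (sq_nonneg _)]
  by_cases hx : x ∈ univ.pi fun j => Ico (0 : ℝ) (p.2.2 j) <;>
    simp only [hx, indicator_of_mem, indicator_of_notMem, mem_compl_iff, not_false_eq_true,
      not_true_eq_false] <;>
    nlinarith [sq_nonneg (z + p.1), sq_nonneg (z + p.2.1), sq_nonneg p.1, sq_nonneg p.2.1]

lemma measurable (p : ℝ × ℝ × (Fin d → ℝ)) :
    Measurable fun xz : (Fin d → ℝ) × ℝ => treeLoss xz.1 xz.2 p := by
  have hbox : MeasurableSet (univ.pi fun j => Ico (0 : ℝ) (p.2.2 j)) :=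
    .univ_pi fun _ => measurableSet_Ico
  unfold treeLoss
  fun_prop (disch := measurability)

lemma continuousAt_of_forall_ne {x : Fin d → ℝ} {p : ℝ × ℝ × (Fin d → ℝ)}
    (hx : ∀ j, x j ≠ p.2.2 j) (z : ℝ) :
    ContinuousAt (treeLoss x z) p := by
  have hbox : ∀ᶠ q in 𝓝 p, (x ∈ univ.pi (fun j => Ico 0 (q.2.2 j)) ↔
      x ∈ univ.pi fun j => Ico 0 (p.2.2 j)) :=
    (continuous_snd.comp continuous_snd).continuousAt.eventually (eventually_mem_pi_Ico_iff hx)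
  refine ContinuousAt.congr (f := fun q => treeLoss x z (q.1, q.2.1, p.2.2))
    (by dsimp only [treeLoss]; fun_prop) ?_
  filter_upwards [hbox] with q hq
  by_cases hp : x ∈ univ.pi fun j => Ico (0 : ℝ) (p.2.2 j)
  · simp [treeLoss, hp, hq.2 hp]
  · simp [treeLoss, hp, mt hq.1 hp]

end treeLoss

theorem continuousOn_expected_tree_loss_general {Ω : Type*} [MeasurableSpace Ω]
    (μ : Measure Ω) [IsProbabilityMeasure μ]
    {d : ℕ} (X : Ω → (Fin d → ℝ)) (hX : Measurable X)
    (hdens : Measure.map X μ ≪ (volume : Measure (Fin d → ℝ)))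
    (Z : Ω → ℝ) (hZ : MemLp Z 2 μ) :
    ContinuousOn (fun p : ℝ × ℝ × (Fin d → ℝ) => ∫ ω, treeLoss (X ω) (Z ω) p ∂μ)
      (Set.univ ×ˢ Set.univ ×ˢ Set.Icc (0 : Fin d → ℝ) 1) := by
  refine (continuous_iff_continuousAt.2 fun p => ?_).continuousOn
  set K := p.1 ^ 2 + p.2.1 ^ 2 + 1
  have hK : ∀ᶠ q in 𝓝 p, q.1 ^ 2 + q.2.1 ^ 2 < K :=
    (by fun_prop : Continuous fun q : ℝ × ℝ × (Fin d → ℝ) => q.1 ^ 2 + q.2.1 ^ 2).continuousAt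
      |>.eventually_lt continuousAt_const (lt_add_one _)
  have hXZ : AEMeasurable (fun ω => (X ω, Z ω)) μ :=
    hX.aemeasurable.prodMk hZ.aestronglyMeasurable.aemeasurable
  refine continuousAt_of_dominated (bound := fun ω => 2 * Z ω ^ 2 + 2 * K)
    (.of_forall fun q => ((treeLoss.measurable q).comp_aemeasurable hXZ).aestronglyMeasurable)
    ?_ ((hZ.integrable_sq.const_mul 2).add (integrable_const _)) ?_
  · filter_upwards [hK] with q hq
    exact ae_of_all _ fun ω => by linarith [treeLoss.norm_le (X ω) (Z ω) q]
  · filter_upwards [ae_of_ae_map hX.aemeasurable (hdens.ae_le (ae_forall_apply_ne p.2.2))]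
      with ω hω
    exact treeLoss.continuousAt_of_forall_ne hω (Z ω)

/-- Let `X` be valued in `[0,1]^d` with a density w.r.t. Lebesgue measure and `Z` square
integrable.  Then `ν(α, β, a) = E[(Z − α·1{X ∈ B_a} − β·1{X ∉ B_a})²]` is continuous on
`ℝ × ℝ × [0,1]^d`. -/
theorem continuousOn_expected_tree_loss {Ω : Type*} [MeasurableSpace Ω]
    (μ : Measure Ω) [IsProbabilityMeasure μ]
    {d : ℕ} (X : Ω → (Fin d → ℝ)) (hX : Measurable X)
    (hXval : ∀ ω, X ω ∈ Set.Icc (0 : Fin d → ℝ) 1)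
    (hdens : Measure.map X μ ≪ (volume : Measure (Fin d → ℝ)))
    (Z : Ω → ℝ) (hZ : MemLp Z 2 μ) :
    ContinuousOn (fun p : ℝ × ℝ × (Fin d → ℝ) => ∫ ω, treeLoss (X ω) (Z ω) p ∂μ)
      (Set.univ ×ˢ Set.univ ×ˢ Set.Icc (0 : Fin d → ℝ) 1) :=
  continuousOn_expected_tree_loss_general μ X hX hdens Z hZ
end

section
/- Let X be a random variable with values in [0,1]^d admitting a density with respect to the Lebesgue measure on [0,1]^d, let Z be a real-valued square-integrable random variable, and let ((X_m, Z_m))_{m ≥ 1} be a sequence of independent random variables each distributed as (X, Z). For a ∈ [0,1]^d write B_a = Π_{j=1}^d [0, a(j)). Define ν_M(α, β, a) = (1/M) Σ_{m=1}^M (Z_m − α·1{X_m ∈ B_a} − β·1{X_m ∉ B_a})² and ν(α, β, a) = E[(Z − α·1{X ∈ B_a} − β·1{X ∉ B_a})²]. Then, for every C > 0, almost surely inf_{a ∈ [0,1]^d, |α| ≤ C, |β| ≤ C} ν_M(α, β, a) → inf_{a ∈ [0,1]^d, |α| ≤ C, |β| ≤ C} ν(α, β, a) as M → ∞. -/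
open MeasureTheory ProbabilityTheory Filter

open Topology Set

/-!
The loss `q ↦ treeLoss x z q` jumps only when some coordinate of `x` lies on a face of the box,
an event of Lebesgue measure zero; so for every fixed parameter it is continuous for almost
every sample. Since boxes are half-open, every parameter can moreover be approximated by rational
parameters without increasing the loss at a given sample by more than `ε`.

Upper bound: a near-minimiser of the risk is approximated by a rational parameter of almost the
same risk (dominated convergence), and the strong law applies to that parameter. Lower bound: the
infimum of the loss over rational parameters in a small ball is a measurable minorant of the loss
on that ball, whose mean tends to the risk at the centre as the radius shrinks (dominated
convergence again). By compactness finitely many such balls cover the parameter set, and the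
strong law for the finitely many minorants bounds the empirical infimum from below. Only countably
many strong laws are invoked, so a single null set serves every `ε`.
-/

section EmpiricalMean

variable {S : Type*}

noncomputable def empiricalMean (f : S → ℝ) (x : ℕ → S) (M : ℕ) : ℝ :=
  (M : ℝ)⁻¹ * ∑ m ∈ Finset.range M, f (x m)

lemma empiricalMean_nonneg {f : S → ℝ} (hf : ∀ s, 0 ≤ f s) (x : ℕ → S) (M : ℕ) :
    0 ≤ empiricalMean f x M :=
  mul_nonneg (by positivity) (Finset.sum_nonneg fun m _ => hf (x m))

lemma empiricalMean_mono {f g : S → ℝ} (hfg : ∀ s, f s ≤ g s) (x : ℕ → S) (M : ℕ) :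
    empiricalMean f x M ≤ empiricalMean g x M :=
  mul_le_mul_of_nonneg_left (Finset.sum_le_sum fun m _ => hfg (x m)) (by positivity)

theorem ae_tendsto_empiricalMean {Ω : Type*} [MeasurableSpace Ω] [MeasurableSpace S]
    {μ : Measure Ω} {π : Measure S} {W : ℕ → Ω → S}
    (hWmeas : ∀ m, Measurable (W m)) (hWindep : iIndepFun W μ)
    (hWident : ∀ m, μ.map (W m) = π) {f : S → ℝ} (hf : Measurable f)
    (hfi : Integrable f π) :
    ∀ᵐ ω ∂μ, Tendsto (empiricalMean f (W · ω)) atTop (𝓝 (∫ s, f s ∂π)) := by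
  have hint : Integrable (f ∘ W 0) μ := by
    rwa [← integrable_map_measure hf.aestronglyMeasurable (hWmeas 0).aemeasurable, hWident 0]
  have hmean : μ[f ∘ W 0] = ∫ s, f s ∂π := by
    rw [← hWident 0, integral_map (hWmeas 0).aemeasurable hf.aestronglyMeasurable]
    rfl
  have hident : ∀ m, IdentDistrib (f ∘ W m) (f ∘ W 0) μ μ := fun m =>
    IdentDistrib.comp ⟨(hWmeas m).aemeasurable, (hWmeas 0).aemeasurable, by
      rw [hWident, hWident]⟩ hf
  filter_upwards [strong_law_ae_real (fun m => f ∘ W m) hint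
    (fun i j hij => (hWindep.indepFun hij).comp hf hf) hident] with ω hω
  rw [hmean] at hω
  simp only [div_eq_inv_mul] at hω
  exact hω

end EmpiricalMean

section InfOnBall

variable {Θ S : Type*} [PseudoMetricSpace Θ] {L : Θ → S → ℝ} {A K : Set Θ}

def LossDense (L : Θ → S → ℝ) (A K : Set Θ) : Prop :=
  ∀ q ∈ K, ∀ s, ∀ δ > 0, ∀ ε > 0, ∃ r ∈ A, dist r q < δ ∧ L r s < L q s + ε

noncomputable def infOnBall (L : Θ → S → ℝ) (A : Set Θ) (q : Θ) (δ : ℝ) (s : S) : ℝ :=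
  ⨅ r : ↥(A ∩ Metric.ball q δ), L r s

lemma infOnBall_nonneg (hAK : A ⊆ K) (hL0 : ∀ q ∈ K, ∀ s, 0 ≤ L q s) (q : Θ) (δ : ℝ)
    (s : S) : 0 ≤ infOnBall L A q δ s :=
  Real.iInf_nonneg fun r => hL0 r (hAK r.2.1) s

lemma infOnBall_le (hAK : A ⊆ K) (hL0 : ∀ q ∈ K, ∀ s, 0 ≤ L q s) {q r : Θ} {δ : ℝ}
    (hr : r ∈ A) (hrq : dist r q < δ) (s : S) : infOnBall L A q δ s ≤ L r s := by
  refine ciInf_le ?_ (⟨r, hr, hrq⟩ : ↥(A ∩ Metric.ball q δ))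
  exact ⟨0, by rintro _ ⟨t, rfl⟩; exact hL0 t (hAK t.2.1) s⟩

lemma infOnBall_le_infOnBall (hAK : A ⊆ K) (hL0 : ∀ q ∈ K, ∀ s, 0 ≤ L q s) {q q' : Θ}
    {δ δ' : ℝ} (hne : (A ∩ Metric.ball q' δ').Nonempty)
    (hsub : Metric.ball q' δ' ⊆ Metric.ball q δ) (s : S) :
    infOnBall L A q δ s ≤ infOnBall L A q' δ' s := by
  have := hne.to_subtype
  exact le_ciInf fun r => infOnBall_le hAK hL0 r.2.1 (hsub r.2.2) s

lemma infOnBall_le_of_mem (hAK : A ⊆ K) (hL0 : ∀ q ∈ K, ∀ s, 0 ≤ L q s)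
    (hdense : LossDense L A K) {q q' : Θ} {δ : ℝ} (hq' : q' ∈ K) (hq'q : dist q' q < δ)
    (s : S) : infOnBall L A q δ s ≤ L q' s := by
  refine le_of_forall_pos_lt_add fun ε hε => ?_
  obtain ⟨r, hrA, hrq', hr⟩ := hdense q' hq' s (δ - dist q' q) (by linarith) ε hε
  have hrq : dist r q < δ := by linarith [dist_triangle r q' q]
  exact (infOnBall_le hAK hL0 hrA hrq s).trans_lt hr

lemma tendsto_infOnBall (hAK : A ⊆ K) (hL0 : ∀ q ∈ K, ∀ s, 0 ≤ L q s)
    (hdense : LossDense L A K) {q : Θ} (hq : q ∈ K) {s : S}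
    (hcont : ContinuousAt (L · s) q) :
    Tendsto (fun k : ℕ => infOnBall L A q (1 / (k + 1)) s) atTop (𝓝 (L q s)) := by
  refine tendsto_order.2 ⟨fun a ha => ?_, fun a ha => Eventually.of_forall fun k =>
    (infOnBall_le_of_mem hAK hL0 hdense hq (by simp; positivity) s).trans_lt ha⟩
  obtain ⟨b, hab, hb⟩ := exists_between ha
  obtain ⟨δ, hδ, hball⟩ := Metric.eventually_nhds_iff.1 (hcont.eventually (lt_mem_nhds hb))
  obtain ⟨k₀, hk₀⟩ := exists_nat_one_div_lt hδ
  filter_upwards [eventually_ge_atTop k₀] with k hk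
  obtain ⟨r, hrA, hrq, -⟩ := hdense q hq s (1 / (k + 1)) (by positivity) 1 one_pos
  have : Nonempty ↥(A ∩ Metric.ball q (1 / (k + 1))) := ⟨r, hrA, hrq⟩
  refine hab.trans_le (le_ciInf fun r => (hball ?_).le)
  calc dist (r : Θ) q < 1 / (k + 1) := r.2.2
    _ ≤ 1 / (k₀ + 1) := by gcongr
    _ < δ := hk₀

lemma norm_infOnBall_le (hAK : A ⊆ K) (hL0 : ∀ q ∈ K, ∀ s, 0 ≤ L q s)
    (hdense : LossDense L A K) {F : S → ℝ} (hLF : ∀ q ∈ K, ∀ s, L q s ≤ F s) {q : Θ}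
    (hq : q ∈ K) {δ : ℝ} (hδ : 0 < δ) (s : S) : ‖infOnBall L A q δ s‖ ≤ F s := by
  rw [Real.norm_of_nonneg (infOnBall_nonneg hAK hL0 q δ s)]
  exact (infOnBall_le_of_mem hAK hL0 hdense hq (by simpa) s).trans (hLF q hq s)

variable [MeasurableSpace S] {F : S → ℝ} {π : Measure S}

lemma measurable_infOnBall (hA : A.Countable) (hmeas : ∀ q ∈ A, Measurable (L q)) (q : Θ)
    (δ : ℝ) : Measurable (infOnBall L A q δ) :=
  have := (hA.mono inter_subset_left : (A ∩ Metric.ball q δ).Countable).to_subtype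
  Measurable.iInf fun r => hmeas r r.2.1

lemma tendsto_integral_infOnBall (hAK : A ⊆ K) (hL0 : ∀ q ∈ K, ∀ s, 0 ≤ L q s)
    (hdense : LossDense L A K) (hA : A.Countable) (hmeas : ∀ q ∈ K, Measurable (L q))
    (hF : Integrable F π) (hLF : ∀ q ∈ K, ∀ s, L q s ≤ F s) {q : Θ} (hq : q ∈ K)
    (hcont : ∀ᵐ s ∂π, ContinuousAt (L · s) q) :
    Tendsto (fun k : ℕ => ∫ s, infOnBall L A q (1 / (k + 1)) s ∂π) atTop
      (𝓝 (∫ s, L q s ∂π)) :=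
  tendsto_integral_of_dominated_convergence F
    (fun _ => (measurable_infOnBall hA (fun r hr => hmeas r (hAK hr)) q _).aestronglyMeasurable)
    hF (fun _ => ae_of_all _ (norm_infOnBall_le hAK hL0 hdense hLF hq Nat.one_div_pos_of_nat))
    (hcont.mono fun _ hs => tendsto_infOnBall hAK hL0 hdense hq hs)

lemma tendsto_integral_of_tendsto {ι : Type*} {l : Filter ι} [l.IsCountablyGenerated]
    (hmeas : ∀ q ∈ K, Measurable (L q)) (hL0 : ∀ q ∈ K, ∀ s, 0 ≤ L q s) (hF : Integrable F π)
    (hLF : ∀ q ∈ K, ∀ s, L q s ≤ F s) {r : ι → Θ} (hrK : ∀ i, r i ∈ K) {q : Θ}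
    (hr : Tendsto r l (𝓝 q)) (hcont : ∀ᵐ s ∂π, ContinuousAt (L · s) q) :
    Tendsto (fun i => ∫ s, L (r i) s ∂π) l (𝓝 (∫ s, L q s ∂π)) :=
  tendsto_integral_filter_of_dominated_convergence F
    (.of_forall fun i => (hmeas _ (hrK i)).aestronglyMeasurable)
    (.of_forall fun i => ae_of_all _ fun s => by
      rw [Real.norm_of_nonneg (hL0 _ (hrK i) s)]; exact hLF _ (hrK i) s) hF
    (hcont.mono fun _ hs => hs.tendsto.comp hr)

lemma integrable_infOnBall (hAK : A ⊆ K) (hL0 : ∀ q ∈ K, ∀ s, 0 ≤ L q s)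
    (hdense : LossDense L A K) (hA : A.Countable) (hmeas : ∀ q ∈ K, Measurable (L q))
    (hF : Integrable F π) (hLF : ∀ q ∈ K, ∀ s, L q s ≤ F s) {q : Θ} (hq : q ∈ K) {δ : ℝ}
    (hδ : 0 < δ) : Integrable (infOnBall L A q δ) π :=
  hF.mono' (measurable_infOnBall hA (fun r hr => hmeas r (hAK hr)) q δ).aestronglyMeasurable
    (ae_of_all _ (norm_infOnBall_le hAK hL0 hdense hLF hq hδ))

lemma exists_mem_integral_lt [Nonempty S] (hAK : A ⊆ K) (hL0 : ∀ q ∈ K, ∀ s, 0 ≤ L q s)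
    (hdense : LossDense L A K) (hmeas : ∀ q ∈ K, Measurable (L q)) (hF : Integrable F π)
    (hLF : ∀ q ∈ K, ∀ s, L q s ≤ F s) {q : Θ} (hq : q ∈ K)
    (hcont : ∀ᵐ s ∂π, ContinuousAt (L · s) q) {ε : ℝ} (hε : 0 < ε) :
    ∃ r ∈ A, ∫ s, L r s ∂π < ∫ s, L q s ∂π + ε := by
  have hseq : ∀ k : ℕ, ∃ r ∈ A, dist r q < 1 / (k + 1) := fun k => by
    obtain ⟨r, hrA, hrq, -⟩ :=
      hdense q hq (Classical.arbitrary S) _ Nat.one_div_pos_of_nat 1 one_pos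
    exact ⟨r, hrA, hrq⟩
  choose r hrA hrq using hseq
  have hr : Tendsto r atTop (𝓝 q) := tendsto_iff_dist_tendsto_zero.2 <|
    squeeze_zero (fun _ => dist_nonneg) (fun k => (hrq k).le)
      tendsto_one_div_add_atTop_nhds_zero_nat
  obtain ⟨k, hk⟩ := ((tendsto_integral_of_tendsto hmeas hL0 hF hLF (fun k => hAK (hrA k)) hr
    hcont).eventually_lt_const (lt_add_of_pos_right _ hε)).exists
  exact ⟨r k, hrA k, hk⟩

lemma exists_infOnBall_cover [Nonempty S] (hAK : A ⊆ K) (hL0 : ∀ q ∈ K, ∀ s, 0 ≤ L q s)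
    (hdense : LossDense L A K) (hA : A.Countable) (hmeas : ∀ q ∈ K, Measurable (L q))
    (hF : Integrable F π) (hLF : ∀ q ∈ K, ∀ s, L q s ≤ F s) {q : Θ} (hq : q ∈ K)
    (hcont : ∀ᵐ s ∂π, ContinuousAt (L · s) q) {b : ℝ} (hb : b < ∫ s, L q s ∂π) :
    ∃ r ∈ A, ∃ n : ℕ, q ∈ Metric.ball r (1 / (n + 1)) ∧
      b < ∫ s, infOnBall L A r (1 / (n + 1)) s ∂π := by
  obtain ⟨k, hk⟩ := ((tendsto_integral_infOnBall hAK hL0 hdense hA hmeas hF hLF hq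
    hcont).eventually_const_lt hb).exists
  have hδ : (0 : ℝ) < 1 / (2 * k + 2) := by positivity
  obtain ⟨r, hrA, hrq, -⟩ := hdense q hq (Classical.arbitrary S) _ hδ 1 one_pos
  have hsub : Metric.ball r (1 / (2 * k + 2)) ⊆ Metric.ball q (1 / (k + 1)) := by
    refine Metric.ball_subset_ball' ?_
    have : (1 : ℝ) / (2 * k + 2) + 1 / (2 * k + 2) = 1 / (k + 1) := by field_simp; ring
    linarith
  have hmono : ∀ s, infOnBall L A q (1 / (k + 1)) s ≤ infOnBall L A r (1 / (2 * k + 2)) s :=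
    infOnBall_le_infOnBall hAK hL0 ⟨r, hrA, Metric.mem_ball_self hδ⟩ hsub
  have hradius : ((2 * k + 1 : ℕ) : ℝ) + 1 = 2 * k + 2 := by push_cast; ring
  refine ⟨r, hrA, 2 * k + 1, ?_, ?_⟩ <;> rw [hradius]
  · rw [Metric.mem_ball, dist_comm]
    exact hrq
  · exact hk.trans_le (integral_mono
      (integrable_infOnBall hAK hL0 hdense hA hmeas hF hLF hq Nat.one_div_pos_of_nat)
      (integrable_infOnBall hAK hL0 hdense hA hmeas hF hLF (hAK hrA) hδ) hmono)

end InfOnBall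

section UniformLaw

variable {Θ S : Type*} [PseudoMetricSpace Θ] [MeasurableSpace S] {L : Θ → S → ℝ}
  {A K : Set Θ} {F : S → ℝ} {π : Measure S}

lemma eventually_iInf_empiricalMean_lt [Nonempty K] (hAK : A ⊆ K)
    (hL0 : ∀ q ∈ K, ∀ s, 0 ≤ L q s) (hdense : LossDense L A K)
    (hmeas : ∀ q ∈ K, Measurable (L q)) (hF : Integrable F π)
    (hLF : ∀ q ∈ K, ∀ s, L q s ≤ F s) (hcont : ∀ q ∈ K, ∀ᵐ s ∂π, ContinuousAt (L · s) q)
    {x : ℕ → S} (hx : ∀ r ∈ A, Tendsto (empiricalMean (L r) x) atTop (𝓝 (∫ s, L r s ∂π)))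
    {a : ℝ} (ha : ⨅ q : K, ∫ s, L q s ∂π < a) :
    ∀ᶠ M in atTop, ⨅ q : K, empiricalMean (L q) x M < a := by
  have : Nonempty S := ⟨x 0⟩
  obtain ⟨q, hq⟩ := exists_lt_of_ciInf_lt ha
  obtain ⟨r, hrA, hr⟩ := exists_mem_integral_lt hAK hL0 hdense hmeas hF hLF q.2
    (hcont q q.2) (sub_pos.2 hq)
  filter_upwards [(hx r hrA).eventually_lt_const (show ∫ s, L r s ∂π < a by linarith)]
    with M hM
  refine (ciInf_le ?_ (⟨r, hAK hrA⟩ : K)).trans_lt hM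
  exact ⟨0, by rintro _ ⟨p, rfl⟩; exact empiricalMean_nonneg (hL0 p p.2) x M⟩

lemma eventually_lt_iInf_empiricalMean [Nonempty K] (hK : IsCompact K) (hA : A.Countable)
    (hAK : A ⊆ K) (hL0 : ∀ q ∈ K, ∀ s, 0 ≤ L q s) (hdense : LossDense L A K)
    (hmeas : ∀ q ∈ K, Measurable (L q)) (hF : Integrable F π)
    (hLF : ∀ q ∈ K, ∀ s, L q s ≤ F s) (hcont : ∀ q ∈ K, ∀ᵐ s ∂π, ContinuousAt (L · s) q)
    {x : ℕ → S} (hx : ∀ r ∈ A, ∀ n : ℕ, Tendsto (empiricalMean (infOnBall L A r (1 / (n + 1))) x)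
      atTop (𝓝 (∫ s, infOnBall L A r (1 / (n + 1)) s ∂π)))
    {a : ℝ} (ha : a < ⨅ q : K, ∫ s, L q s ∂π) :
    ∀ᶠ M in atTop, a < ⨅ q : K, empiricalMean (L q) x M := by
  have : Nonempty S := ⟨x 0⟩
  obtain ⟨b, hab, hb⟩ := exists_between ha
  let good : Set (Θ × ℕ) := {i | i.1 ∈ A ∧ b < ∫ s, infOnBall L A i.1 (1 / (i.2 + 1)) s ∂π}
  have hcover : K ⊆ ⋃ i ∈ good, Metric.ball i.1 (1 / (i.2 + 1)) := fun q hq => by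
    have hbq : b < ∫ s, L q s ∂π := hb.trans_le <| ciInf_le
      ⟨0, by rintro _ ⟨p, rfl⟩; exact integral_nonneg (hL0 p p.2)⟩ (⟨q, hq⟩ : K)
    obtain ⟨r, hrA, n, hqr, hn⟩ :=
      exists_infOnBall_cover hAK hL0 hdense hA hmeas hF hLF hq (hcont q hq) hbq
    exact mem_iUnion₂.2 ⟨(r, n), ⟨hrA, hn⟩, hqr⟩
  obtain ⟨I, hIgood, hIfin, hKI⟩ :=
    hK.elim_finite_subcover_image (fun _ _ => Metric.isOpen_ball) hcover
  filter_upwards [hIfin.eventually_all.2 fun i hi =>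
    (hx i.1 (hIgood hi).1 i.2).eventually_const_lt (hIgood hi).2] with M hM
  refine hab.trans_le (le_ciInf fun q => ?_)
  obtain ⟨i, hi, hqi⟩ := mem_iUnion₂.1 (hKI q.2)
  exact (hM i hi).le.trans
    (empiricalMean_mono (infOnBall_le_of_mem hAK hL0 hdense q.2 hqi) x M)

theorem ae_tendsto_iInf_empiricalMean {Ω : Type*} [MeasurableSpace Ω] {μ : Measure Ω}
    (hK : IsCompact K) (hA : A.Countable) (hAK : A ⊆ K) (hL0 : ∀ q ∈ K, ∀ s, 0 ≤ L q s)
    (hdense : LossDense L A K) (hmeas : ∀ q ∈ K, Measurable (L q)) (hF : Integrable F π)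
    (hLF : ∀ q ∈ K, ∀ s, L q s ≤ F s) (hcont : ∀ q ∈ K, ∀ᵐ s ∂π, ContinuousAt (L · s) q)
    {W : ℕ → Ω → S} (hWmeas : ∀ m, Measurable (W m)) (hWindep : iIndepFun W μ)
    (hWident : ∀ m, μ.map (W m) = π) :
    ∀ᵐ ω ∂μ, Tendsto (fun M => ⨅ q : K, empiricalMean (L q) (W · ω) M) atTop
      (𝓝 (⨅ q : K, ∫ s, L q s ∂π)) := by
  rcases K.eq_empty_or_nonempty with rfl | hKne
  · simp
  have : Nonempty K := hKne.to_subtype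
  have hslln : ∀ᵐ ω ∂μ, ∀ r ∈ A,
      Tendsto (empiricalMean (L r) (W · ω)) atTop (𝓝 (∫ s, L r s ∂π)) ∧
      ∀ n : ℕ, Tendsto (empiricalMean (infOnBall L A r (1 / (n + 1))) (W · ω)) atTop
        (𝓝 (∫ s, infOnBall L A r (1 / (n + 1)) s ∂π)) := by
    refine (ae_ball_iff hA).2 fun r hr => ?_
    refine (ae_tendsto_empiricalMean hWmeas hWindep hWident (hmeas r (hAK hr)) ?_).and
      (ae_all_iff.2 fun n => ae_tendsto_empiricalMean hWmeas hWindep hWident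
        (measurable_infOnBall hA (fun r hr => hmeas r (hAK hr)) r _)
        (integrable_infOnBall hAK hL0 hdense hA hmeas hF hLF (hAK hr) Nat.one_div_pos_of_nat))
    exact hF.mono' (hmeas r (hAK hr)).aestronglyMeasurable (ae_of_all _ fun s => by
      rw [Real.norm_of_nonneg (hL0 r (hAK hr) s)]; exact hLF r (hAK hr) s)
  filter_upwards [hslln] with ω hω
  exact tendsto_order.2
    ⟨fun a ha => eventually_lt_iInf_empiricalMean hK hA hAK hL0 hdense hmeas hF hLF hcont
      (fun r hr => (hω r hr).2) ha,
    fun a ha => eventually_iInf_empiricalMean_lt hAK hL0 hdense hmeas hF hLF hcont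
      (fun r hr => (hω r hr).1) ha⟩

end UniformLaw

section TreeLoss

open scoped Classical

variable {d : ℕ}

def box (a : Fin d → ℝ) : Set (Fin d → ℝ) := univ.pi fun j => Ico 0 (a j)

def treeParams (C : ℝ) (d : ℕ) : Set (ℝ × ℝ × (Fin d → ℝ)) :=
  {q | |q.1| ≤ C ∧ |q.2.1| ≤ C ∧ q.2.2 ∈ Icc 0 1}

lemma treeParams_eq_prod (C : ℝ) (d : ℕ) :
    treeParams C d = Icc (-C) C ×ˢ Icc (-C) C ×ˢ Icc 0 1 := by
  ext q
  simp only [treeParams, mem_ofPred_eq, mem_prod, mem_Icc, abs_le]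

lemma isCompact_treeParams (C : ℝ) (d : ℕ) : IsCompact (treeParams C d) := by
  rw [treeParams_eq_prod]
  exact isCompact_Icc.prod (isCompact_Icc.prod isCompact_Icc)

lemma treeLoss_eq_ite (x : Fin d → ℝ) (z : ℝ) (q : ℝ × ℝ × (Fin d → ℝ)) :
    treeLoss x z q = (z - if x ∈ box q.2.2 then q.1 else q.2.1) ^ 2 := by
  unfold treeLoss box
  split_ifs with hx
  · rw [indicator_of_mem hx, indicator_of_notMem (notMem_compl_iff.2 hx)]
    ring
  · rw [indicator_of_notMem hx, indicator_of_mem (mem_compl hx)]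
    ring

lemma treeLoss_le_sq {C : ℝ} {q : ℝ × ℝ × (Fin d → ℝ)} (hq : q ∈ treeParams C d)
    (x : Fin d → ℝ) (z : ℝ) : treeLoss x z q ≤ (|z| + C) ^ 2 := by
  rw [treeLoss_eq_ite, ← sq_abs]
  have hc : |if x ∈ box q.2.2 then q.1 else q.2.1| ≤ C := by
    split_ifs
    exacts [hq.1, hq.2.1]
  gcongr
  exact (abs_sub _ _).trans (by gcongr)

lemma measurable_treeLoss (q : ℝ × ℝ × (Fin d → ℝ)) :
    Measurable fun s : (Fin d → ℝ) × ℝ => treeLoss s.1 s.2 q := by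
  simp_rw [treeLoss_eq_ite]
  exact (measurable_snd.sub (Measurable.ite (measurable_fst
    (MeasurableSet.univ_pi fun _ => measurableSet_Ico)) measurable_const
      measurable_const)).pow_const 2

lemma eventually_mem_box_iff {x a : Fin d → ℝ} (hx : ∀ j, x j ≠ a j) :
    ∀ᶠ a' in 𝓝 a, (x ∈ box a' ↔ x ∈ box a) := by
  have hcoord : ∀ j, ∀ᶠ a' : Fin d → ℝ in 𝓝 a, (x j < a' j ↔ x j < a j) := fun j => by
    rcases (hx j).lt_or_gt with h | h
    · filter_upwards [(continuous_apply j).continuousAt.eventually (lt_mem_nhds h)]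
        with a' ha' using iff_of_true ha' h
    · filter_upwards [(continuous_apply j).continuousAt.eventually (gt_mem_nhds h)]
        with a' ha' using iff_of_false ha'.not_gt h.not_gt
  filter_upwards [eventually_all.2 hcoord] with a' ha'
  simp only [box, mem_univ_pi, mem_Ico, ha']

lemma continuousAt_treeLoss {x : Fin d → ℝ} {z : ℝ} {q : ℝ × ℝ × (Fin d → ℝ)}
    (hx : ∀ j, x j ≠ q.2.2 j) : ContinuousAt (treeLoss x z) q := by
  have hloc : (fun q' : ℝ × ℝ × (Fin d → ℝ) => (z - if x ∈ box q.2.2 then q'.1 else q'.2.1) ^ 2)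
      =ᶠ[𝓝 q] treeLoss x z := by
    filter_upwards [(continuous_snd.comp continuous_snd).continuousAt.eventually
      (eventually_mem_box_iff hx)] with q' hq'
    simp only [Function.comp_apply] at hq'
    rw [treeLoss_eq_ite, hq']
  refine ContinuousAt.congr ?_ hloc
  split_ifs <;> fun_prop

lemma ae_ne_of_absolutelyContinuous {ν : Measure (Fin d → ℝ)} (hν : ν ≪ volume)
    (a : Fin d → ℝ) : ∀ᵐ x ∂ν, ∀ j, x j ≠ a j :=
  hν.ae_le <| ae_all_iff.2 fun j => by
    rw [volume_pi]
    exact Measure.ae_eval_ne (α := fun _ : Fin d => ℝ) _ j (a j)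

lemma exists_rat_near_mem_Ico_iff {a : ℝ} (ha : a ∈ Icc (0 : ℝ) 1) (x : ℝ) {η : ℝ}
    (hη : 0 < η) : ∃ b : ℚ, (b : ℝ) ∈ Icc (0 : ℝ) 1 ∧ dist (b : ℝ) a < η ∧
      (x ∈ Ico 0 (b : ℝ) ↔ x ∈ Ico 0 a) := by
  have below : ∀ l < a, ∃ b : ℚ, l < b ∧ (b : ℝ) < a ∧ dist (b : ℝ) a < η := fun l hl => by
    obtain ⟨b, hb, hba⟩ := exists_rat_btwn (max_lt hl (sub_lt_self a hη))
    refine ⟨b, (le_max_left _ _).trans_lt hb, hba, ?_⟩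
    rw [Real.dist_eq, abs_sub_lt_iff]
    constructor <;> linarith [le_max_right l (a - η)]
  by_cases hx : x ∈ Ico 0 a
  · obtain ⟨b, hxb, hba, hb⟩ := below x hx.2
    exact ⟨b, ⟨hx.1.trans hxb.le, hba.le.trans ha.2⟩, hb, iff_of_true ⟨hx.1, hxb⟩ hx⟩
  rcases ha.1.eq_or_lt with h0 | h0
  · exact ⟨0, by simp, by simp [← h0, hη], by simp [← h0]⟩
  · obtain ⟨b, h0b, hba, hb⟩ := below 0 h0
    exact ⟨b, ⟨h0b.le, hba.le.trans ha.2⟩, hb,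
      iff_of_false (fun h => hx ⟨h.1, h.2.trans hba⟩) hx⟩

lemma exists_rat_near_mem_box_iff {a : Fin d → ℝ} (ha : a ∈ Icc 0 1) (x : Fin d → ℝ)
    {η : ℝ} (hη : 0 < η) : ∃ b : Fin d → ℚ, (fun j => (b j : ℝ)) ∈ Icc 0 1 ∧
      dist (fun j => (b j : ℝ)) a < η ∧ (x ∈ box (fun j => (b j : ℝ)) ↔ x ∈ box a) := by
  choose b hb01 hbη hbx using fun j => exists_rat_near_mem_Ico_iff ⟨ha.1 j, ha.2 j⟩ (x j) hη
  refine ⟨b, ⟨fun j => (hb01 j).1, fun j => (hb01 j).2⟩, (dist_pi_lt_iff hη).2 hbη, ?_⟩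
  simp only [box, mem_univ_pi, hbx]

lemma exists_rat_abs_le_mem {C α : ℝ} (hC : 0 < C) (hα : |α| ≤ C) {U : Set ℝ}
    (hU : U ∈ 𝓝 α) : ∃ b : ℚ, |(b : ℝ)| ≤ C ∧ (b : ℝ) ∈ U := by
  have hcl : α ∈ closure (Ioo (-C) C) := by
    rw [closure_Ioo (by linarith)]
    exact abs_le.1 hα
  obtain ⟨y, hyU, hy⟩ := mem_closure_iff_nhds.1 hcl _ (interior_mem_nhds.2 hU)
  obtain ⟨b, hbU, hb⟩ :=
    Rat.denseRange_cast.exists_mem_open (isOpen_interior.inter isOpen_Ioo) ⟨y, hyU, hy⟩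
  exact ⟨b, abs_le.2 ⟨hb.1.le, hb.2.le⟩, interior_subset hbU⟩

def ratParam (r : ℚ × ℚ × (Fin d → ℚ)) : ℝ × ℝ × (Fin d → ℝ) :=
  (r.1, r.2.1, fun j => r.2.2 j)

lemma lossDense_treeParams {C : ℝ} (hC : 0 < C) :
    LossDense (fun q (s : (Fin d → ℝ) × ℝ) => treeLoss s.1 s.2 q) (range ratParam ∩ treeParams C d)
      (treeParams C d) := by
  rintro ⟨α, β, a⟩ ⟨hα, hβ, ha⟩ ⟨x, z⟩ δ hδ ε hε
  obtain ⟨a', ha', ha'a, hbox⟩ := exists_rat_near_mem_box_iff ha x hδ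
  have hnear : ∀ c : ℝ, ∀ᶠ v in 𝓝 c, dist v c < δ ∧ (z - v) ^ 2 < (z - c) ^ 2 + ε :=
    fun c => Eventually.and (Metric.ball_mem_nhds c hδ) <|
      (by fun_prop : Continuous fun v : ℝ => (z - v) ^ 2).continuousAt.eventually
        (gt_mem_nhds (lt_add_of_pos_right _ hε))
  obtain ⟨α', hα'C, hα'α, hα'ε⟩ := exists_rat_abs_le_mem hC hα (hnear α)
  obtain ⟨β', hβ'C, hβ'β, hβ'ε⟩ := exists_rat_abs_le_mem hC hβ (hnear β)
  refine ⟨ratParam (α', β', a'), ⟨mem_range_self _, hα'C, hβ'C, ha'⟩, ?_, ?_⟩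
  · simp only [ratParam, Prod.dist_eq, sup_lt_iff]
    exact ⟨hα'α, hβ'β, ha'a⟩
  · simp only [treeLoss_eq_ite, ratParam, hbox]
    split_ifs
    exacts [hα'ε, hβ'ε]

section Law

variable {Ω : Type*} [MeasurableSpace Ω] {μ : Measure Ω} {X : Ω → Fin d → ℝ} {Z : Ω → ℝ}

lemma ae_continuousAt_treeLoss (hXZ : AEMeasurable (fun ω => (X ω, Z ω)) μ)
    (hdens : μ.map X ≪ volume) (q : ℝ × ℝ × (Fin d → ℝ)) :
    ∀ᵐ s ∂μ.map (fun ω => (X ω, Z ω)), ContinuousAt (treeLoss s.1 s.2) q := by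
  have hfst : (μ.map fun ω => (X ω, Z ω)).map Prod.fst = μ.map X :=
    AEMeasurable.map_map_of_aemeasurable measurable_fst.aemeasurable hXZ
  have hX : ∀ᵐ x ∂μ.map X, ∀ j, x j ≠ q.2.2 j := ae_ne_of_absolutelyContinuous hdens _
  rw [← hfst] at hX
  exact (ae_of_ae_map measurable_fst.aemeasurable hX).mono fun s hs => continuousAt_treeLoss hs

lemma integrable_sq_abs_add [IsFiniteMeasure μ] (hXZ : AEMeasurable (fun ω => (X ω, Z ω)) μ)
    (hZ : MemLp Z 2 μ) (C : ℝ) :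
    Integrable (fun s : (Fin d → ℝ) × ℝ => (|s.2| + C) ^ 2) (μ.map fun ω => (X ω, Z ω)) :=
  (integrable_map_measure (by fun_prop : Continuous fun s : (Fin d → ℝ) × ℝ =>
    (|s.2| + C) ^ 2).aestronglyMeasurable hXZ).2 (hZ.abs.add (memLp_const C)).integrable_sq

end Law

end TreeLoss

theorem tendsto_inf_empirical_tree_loss_general {Ω : Type*} [MeasurableSpace Ω]
    (μ : Measure Ω) [IsProbabilityMeasure μ]
    {d : ℕ} (X : Ω → (Fin d → ℝ)) (hX : Measurable X)
    (hdens : Measure.map X μ ≪ (volume : Measure (Fin d → ℝ)))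
    (Z : Ω → ℝ) (hZ : MemLp Z 2 μ)
    (W : ℕ → Ω → (Fin d → ℝ) × ℝ) (hWmeas : ∀ m, Measurable (W m))
    (hWindep : iIndepFun W μ)
    (hWident : ∀ m, Measure.map (W m) μ = Measure.map (fun ω => (X ω, Z ω)) μ) :
    ∀ C > (0 : ℝ), ∀ᵐ ω ∂μ,
      Tendsto (fun M : ℕ =>
          ⨅ p : {q : ℝ × ℝ × (Fin d → ℝ) //
              |q.1| ≤ C ∧ |q.2.1| ≤ C ∧ q.2.2 ∈ Set.Icc (0 : Fin d → ℝ) 1},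
            (M : ℝ)⁻¹ * (∑ m ∈ Finset.range M, treeLoss (W m ω).1 (W m ω).2 ↑p))
        atTop
        (nhds (⨅ p : {q : ℝ × ℝ × (Fin d → ℝ) //
              |q.1| ≤ C ∧ |q.2.1| ≤ C ∧ q.2.2 ∈ Set.Icc (0 : Fin d → ℝ) 1},
            ∫ ω', treeLoss (X ω') (Z ω') ↑p ∂μ)) := by
  intro C hC
  have hXZ : AEMeasurable (fun ω => (X ω, Z ω)) μ :=
    hX.aemeasurable.prodMk hZ.aestronglyMeasurable.aemeasurable
  have hν : ∀ q, ∫ ω', treeLoss (X ω') (Z ω') q ∂μ =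
      ∫ s, treeLoss s.1 s.2 q ∂μ.map (fun ω => (X ω, Z ω)) := fun q =>
    (integral_map hXZ (measurable_treeLoss q).aestronglyMeasurable).symm
  simp only [hν]
  exact ae_tendsto_iInf_empiricalMean (isCompact_treeParams C d)
    ((countable_range ratParam).mono inter_subset_left) inter_subset_right
    (fun _ _ _ => sq_nonneg _) (lossDense_treeParams hC) (fun q _ => measurable_treeLoss q)
    (integrable_sq_abs_add hXZ hZ C) (fun _ hq s => treeLoss_le_sq hq s.1 s.2)
    (fun q _ => ae_continuousAt_treeLoss hXZ hdens q) hWmeas hWindep hWident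

/-- Let `X` be valued in `[0,1]^d` with a density w.r.t. Lebesgue measure, `Z` square
integrable, and `((X_m, Z_m))` i.i.d. copies of `(X, Z)`.  With
`ν_M(α, β, a) = (1/M) Σ_{m=1}^M (Z_m − α·1{X_m ∈ B_a} − β·1{X_m ∉ B_a})²` and
`ν(α, β, a) = E[(Z − α·1{X ∈ B_a} − β·1{X ∉ B_a})²]`, for every `C > 0`, almost surely
`inf_{a ∈ [0,1]^d, |α| ≤ C, |β| ≤ C} ν_M(α, β, a) → inf_{a ∈ [0,1]^d, |α| ≤ C, |β| ≤ C} ν(α, β, a)`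
as `M → ∞`. -/
theorem tendsto_inf_empirical_tree_loss {Ω : Type*} [MeasurableSpace Ω]
    (μ : Measure Ω) [IsProbabilityMeasure μ]
    {d : ℕ} (X : Ω → (Fin d → ℝ)) (hX : Measurable X)
    (hXval : ∀ ω, X ω ∈ Set.Icc (0 : Fin d → ℝ) 1)
    (hdens : Measure.map X μ ≪ (volume : Measure (Fin d → ℝ)))
    (Z : Ω → ℝ) (hZ : MemLp Z 2 μ)
    (W : ℕ → Ω → (Fin d → ℝ) × ℝ) (hWmeas : ∀ m, Measurable (W m))
    (hWindep : iIndepFun W μ)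
    (hWident : ∀ m, Measure.map (W m) μ = Measure.map (fun ω => (X ω, Z ω)) μ) :
    ∀ C > (0 : ℝ), ∀ᵐ ω ∂μ,
      Tendsto (fun M : ℕ =>
          ⨅ p : {q : ℝ × ℝ × (Fin d → ℝ) //
              |q.1| ≤ C ∧ |q.2.1| ≤ C ∧ q.2.2 ∈ Set.Icc (0 : Fin d → ℝ) 1},
            (M : ℝ)⁻¹ * (∑ m ∈ Finset.range M, treeLoss (W m ω).1 (W m ω).2 ↑p))
        atTop
        (nhds (⨅ p : {q : ℝ × ℝ × (Fin d → ℝ) //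
              |q.1| ≤ C ∧ |q.2.1| ≤ C ∧ q.2.2 ∈ Set.Icc (0 : Fin d → ℝ) 1},
            ∫ ω', treeLoss (X ω') (Z ω') ↑p ∂μ)) :=
  tendsto_inf_empirical_tree_loss_general μ X hX hdens Z hZ W hWmeas hWindep hWident
end

section
/- Let (X, Y) be a random vector with X valued in [0,1]^d and Y real-valued and square-integrable, let (Θ_k)_{k ≥ 1} be a sequence of independent, identically distributed ℝ^q-valued random vectors independent of (X, Y), and let T : [0,1]^d × ℝ^q → ℝ be a measurable function with E[T(X, Θ_1)²] < ∞. Define H_B(X) = (1/B) Σ_{k=1}^B T(X, Θ_k). Then lim_{B → ∞} E[(Y − H_B(X))²] = E[(Y − E[T(X, Θ_1) | X])²]. -/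
open MeasureTheory ProbabilityTheory Filter Topology Finset

/-!
Write `φ x = ∫ T x θ dν` with `ν` the law of `Θ₁`. Since `Θ₁` is independent of `X`,
`E[T(X, Θ₁) | X] = φ(X)`, and the errors `u_k = T(X, Θ_k) - φ(X)` are orthogonal in `L²`:
conditionally on `X`, the pair `(Θ_j, Θ_k)` has law `ν ⊗ ν` and each factor has conditional mean
zero. Hence `‖H_B(X) - φ(X)‖₂² = E[u₁²] / B → 0`, i.e. `Y - H_B(X) → Y - φ(X)` in `L²`, and the
squared norms converge.
-/

section L2

variable {α : Type*} [MeasurableSpace α] {μ : Measure α}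

theorem MeasureTheory.MemLp.norm_toLp_sq {f : α → ℝ} (hf : MemLp f 2 μ) :
    ‖hf.toLp f‖ ^ 2 = ∫ a, f a ^ 2 ∂μ := by
  rw [← real_inner_self_eq_norm_sq, L2.inner_def]
  refine integral_congr_ae ?_
  filter_upwards [hf.coeFn_toLp] with a ha
  simp [ha, sq]

theorem tendsto_integral_sq_of_tendsto_integral_sub_sq {ι : Type*} {l : Filter ι}
    {f : ι → α → ℝ} {g : α → ℝ} (hf : ∀ i, MemLp (f i) 2 μ) (hg : MemLp g 2 μ)
    (h : Tendsto (fun i => ∫ a, (f i a - g a) ^ 2 ∂μ) l (𝓝 0)) :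
    Tendsto (fun i => ∫ a, f i a ^ 2 ∂μ) l (𝓝 (∫ a, g a ^ 2 ∂μ)) := by
  have hdist : ∀ i, ‖(hf i).toLp (f i) - hg.toLp g‖ ^ 2 = ∫ a, (f i a - g a) ^ 2 ∂μ := by
    intro i
    rw [← MemLp.toLp_sub, MemLp.norm_toLp_sq]
    rfl
  have hconv : Tendsto (fun i => (hf i).toLp (f i)) l (𝓝 (hg.toLp g)) := by
    rw [tendsto_iff_norm_sub_tendsto_zero]
    have := (Real.continuous_sqrt.tendsto 0).comp h
    simpa [Function.comp_def, ← hdist, Real.sqrt_sq (norm_nonneg _)] using this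
  simpa only [MemLp.norm_toLp_sq] using hconv.norm.pow 2

theorem integral_sq_average_eq_of_orthogonal {u : ℕ → α → ℝ} (hu : ∀ k, MemLp (u k) 2 μ)
    {c : ℝ} (horth : ∀ j k, ∫ a, u j a * u k a ∂μ = if j = k then c else 0) (B : ℕ) :
    ∫ a, ((B : ℝ)⁻¹ * ∑ k ∈ range B, u k a) ^ 2 ∂μ = c / B := by
  have hint : ∀ j k, Integrable (fun a => u j a * u k a) μ := fun j k =>
    memLp_one_iff_integrable.mp ((hu k).mul' (hu j))
  have hexpand : ∀ a, ((B : ℝ)⁻¹ * ∑ k ∈ range B, u k a) ^ 2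
      = (B : ℝ)⁻¹ ^ 2 * ∑ j ∈ range B, ∑ k ∈ range B, u j a * u k a := fun a => by
    rw [mul_pow, sq (∑ k ∈ range B, u k a), sum_mul_sum]
  simp_rw [hexpand]
  rw [integral_const_mul,
    integral_finsetSum _ fun j _ => integrable_finsetSum _ fun k _ => hint j k]
  simp_rw [integral_finsetSum _ fun k _ => hint _ k, horth]
  rw [sum_congr rfl fun j hj => by rw [sum_ite_eq, if_pos hj], sum_const, card_range,
    nsmul_eq_mul]
  rcases eq_or_ne B 0 with rfl | hB
  · simp
  · field_simp

end L2

noncomputable def centeredInSnd {E F : Type*} [MeasurableSpace F] (ν : Measure F)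
    (T : E → F → ℝ) (x : E) (θ : F) : ℝ :=
  T x θ - ∫ θ', T x θ' ∂ν

-- If `T x` is not integrable, both integrals are junk zeros.
theorem integral_centeredInSnd {E F : Type*} [MeasurableSpace F] {ν : Measure F}
    [IsProbabilityMeasure ν] (T : E → F → ℝ) (x : E) :
    ∫ θ, centeredInSnd ν T x θ ∂ν = 0 := by
  unfold centeredInSnd
  by_cases hT : Integrable (T x) ν
  · rw [integral_sub hT (integrable_const _), integral_const]
    simp
  · simp [integral_undef hT]

section Independent

variable {Ω E F : Type*} [MeasurableSpace Ω] [MeasurableSpace E] [MeasurableSpace F]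
  {μ : Measure Ω} [IsProbabilityMeasure μ] {X : Ω → E}

theorem condExp_comp_prod_ae_eq_integral_of_indepFun [StandardBorelSpace F] [Nonempty F]
    {Z : Ω → F} (hX : Measurable X) (hZ : Measurable Z) (hXZ : IndepFun X Z μ)
    {f : E × F → ℝ} (hf : Measurable f) (hf_int : Integrable (fun ω => f (X ω, Z ω)) μ) :
    μ[fun ω => f (X ω, Z ω) | MeasurableSpace.comap X inferInstance]
      =ᵐ[μ] fun ω => ∫ z, f (X ω, z) ∂(μ.map Z) := by
  have hlaw : condDistrib Z X μ =ᵐ[μ.map X] Kernel.const E (μ.map Z) := by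
    refine condDistrib_ae_eq_of_measure_eq_compProd X hZ.aemeasurable ?_
    rw [Measure.compProd_const]
    exact (indepFun_iff_map_prod_eq_prod_map_map hX.aemeasurable hZ.aemeasurable).mp hXZ
  filter_upwards [condExp_prod_ae_eq_integral_condDistrib hX hZ.aemeasurable
    hf.stronglyMeasurable hf_int, ae_of_ae_map hX.aemeasurable hlaw] with ω hcond hω
  rw [hcond, hω, Kernel.const_apply]

theorem integral_comp_prod_eq_integral_integral_of_indepFun [StandardBorelSpace F] [Nonempty F]
    {Z : Ω → F} (hX : Measurable X) (hZ : Measurable Z) (hXZ : IndepFun X Z μ)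
    {f : E × F → ℝ} (hf : Measurable f) (hf_int : Integrable (fun ω => f (X ω, Z ω)) μ) :
    ∫ ω, f (X ω, Z ω) ∂μ = ∫ ω, ∫ z, f (X ω, z) ∂(μ.map Z) ∂μ := by
  rw [← integral_condExp hX.comap_le]
  exact integral_congr_ae (condExp_comp_prod_ae_eq_integral_of_indepFun hX hZ hXZ hf hf_int)

variable {Θ : ℕ → Ω → F} (hX : Measurable X) (hΘmeas : ∀ k, Measurable (Θ k))
  (hindep : IndepFun (fun ω k => Θ k ω) X μ) (hΘident : ∀ k, μ.map (Θ k) = μ.map (Θ 0))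
include hX hΘmeas hindep hΘident

theorem identDistrib_prodMk_of_indepFun (k : ℕ) :
    IdentDistrib (fun ω => (X ω, Θ 0 ω)) (fun ω => (X ω, Θ k ω)) μ μ where
  aemeasurable_fst := (hX.prodMk (hΘmeas 0)).aemeasurable
  aemeasurable_snd := (hX.prodMk (hΘmeas k)).aemeasurable
  map_eq := by
    have hlaw : ∀ k, μ.map (fun ω => (X ω, Θ k ω)) = (μ.map X).prod (μ.map (Θ k)) := fun k =>
      (indepFun_iff_map_prod_eq_prod_map_map hX.aemeasurable (hΘmeas k).aemeasurable).mp
        (hindep.symm.comp measurable_id (measurable_pi_apply k))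
    rw [hlaw 0, hlaw k, hΘident k]

theorem integral_centeredInSnd_mul_centeredInSnd [StandardBorelSpace F] [Nonempty F]
    (hΘindep : iIndepFun Θ μ) {T : E → F → ℝ} (hT : Measurable fun p : E × F => T p.1 p.2)
    (hu : ∀ k, MemLp (fun ω => centeredInSnd (μ.map (Θ 0)) T (X ω) (Θ k ω)) 2 μ) (j k : ℕ) :
    ∫ ω, centeredInSnd (μ.map (Θ 0)) T (X ω) (Θ j ω)
        * centeredInSnd (μ.map (Θ 0)) T (X ω) (Θ k ω) ∂μ
      = if j = k then ∫ ω, ∫ θ, centeredInSnd (μ.map (Θ 0)) T (X ω) θ ^ 2 ∂(μ.map (Θ 0)) ∂μ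
        else 0 := by
  set ν := μ.map (Θ 0)
  have : IsProbabilityMeasure ν := Measure.isProbabilityMeasure_map (hΘmeas 0).aemeasurable
  have hG : Measurable fun p : E × F => centeredInSnd ν T p.1 p.2 :=
    hT.sub ((hT.stronglyMeasurable.integral_prod_right' (ν := ν)).measurable.comp measurable_fst)
  have hint : Integrable
      (fun ω => centeredInSnd ν T (X ω) (Θ j ω) * centeredInSnd ν T (X ω) (Θ k ω)) μ :=
    memLp_one_iff_integrable.mp ((hu k).mul' (hu j))
  rcases eq_or_ne j k with rfl | hjk
  · rw [if_pos rfl]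
    simp_rw [← sq] at hint ⊢
    have hfubini := integral_comp_prod_eq_integral_integral_of_indepFun
      (f := fun p => centeredInSnd ν T p.1 p.2 ^ 2) hX (hΘmeas j)
      (hindep.symm.comp measurable_id (measurable_pi_apply j)) (hG.pow_const 2) hint
    rwa [hΘident j] at hfubini
  · have hpair : μ.map (fun ω => (Θ j ω, Θ k ω)) = ν.prod ν := by
      rw [(indepFun_iff_map_prod_eq_prod_map_map (hΘmeas j).aemeasurable
        (hΘmeas k).aemeasurable).mp (hΘindep.indepFun hjk), hΘident j, hΘident k]
    have hfubini := integral_comp_prod_eq_integral_integral_of_indepFun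
      (f := fun p => centeredInSnd ν T p.1 p.2.1 * centeredInSnd ν T p.1 p.2.2) hX
      ((hΘmeas j).prodMk (hΘmeas k))
      (hindep.symm.comp measurable_id ((measurable_pi_apply j).prodMk (measurable_pi_apply k)))
      ((hG.comp (measurable_fst.prodMk measurable_snd.fst)).mul
        (hG.comp (measurable_fst.prodMk measurable_snd.snd))) hint
    rw [if_neg hjk, hfubini, hpair]
    refine (integral_congr_ae (ae_of_all _ fun ω => ?_)).trans (integral_zero Ω ℝ)
    rw [integral_prod_mul (fun θ => centeredInSnd ν T (X ω) θ)
      (fun θ => centeredInSnd ν T (X ω) θ), integral_centeredInSnd, zero_mul]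

end Independent

theorem tendsto_forest_L2_error_general {Ω : Type*} [MeasurableSpace Ω]
    (μ : Measure Ω) [IsProbabilityMeasure μ]
    {d q : ℕ} (X : Ω → (Fin d → ℝ)) (Y : Ω → ℝ) (Θ : ℕ → Ω → (Fin q → ℝ))
    (hX : Measurable X)
    (hY : MemLp Y 2 μ)
    (hΘmeas : ∀ k, Measurable (Θ k))
    (hΘindep : iIndepFun Θ μ)
    (hΘident : ∀ k, Measure.map (Θ k) μ = Measure.map (Θ 0) μ)
    (hindep : IndepFun (fun ω k => Θ k ω) (fun ω => (X ω, Y ω)) μ)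
    (T : (Fin d → ℝ) → (Fin q → ℝ) → ℝ)
    (hT : Measurable fun p : (Fin d → ℝ) × (Fin q → ℝ) => T p.1 p.2)
    (hTsq : MemLp (fun ω => T (X ω) (Θ 0 ω)) 2 μ) :
    Tendsto (fun B : ℕ => ∫ ω, (Y ω - (B : ℝ)⁻¹ * ∑ k ∈ Finset.range B, T (X ω) (Θ k ω)) ^ 2 ∂μ)
      atTop
      (nhds (∫ ω,
        (Y ω - (μ[fun ω' => T (X ω') (Θ 0 ω')|MeasurableSpace.comap X inferInstance]) ω) ^ 2 ∂μ)) := by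
  set ν := μ.map (Θ 0)
  have hΘX : IndepFun (fun ω k => Θ k ω) X μ := hindep.comp measurable_id measurable_fst
  have hTk : ∀ k, MemLp (fun ω => T (X ω) (Θ k ω)) 2 μ := fun k =>
    ((identDistrib_prodMk_of_indepFun hX hΘmeas hΘX hΘident k).comp hT).memLp_snd hTsq
  have hcond : μ[fun ω' => T (X ω') (Θ 0 ω')|MeasurableSpace.comap X inferInstance]
      =ᵐ[μ] fun ω => ∫ θ, T (X ω) θ ∂ν :=
    condExp_comp_prod_ae_eq_integral_of_indepFun (f := fun p => T p.1 p.2) hX (hΘmeas 0)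
      (hΘX.symm.comp measurable_id (measurable_pi_apply 0)) hT (hTsq.integrable one_le_two)
  have hφX : MemLp (fun ω => ∫ θ, T (X ω) θ ∂ν) 2 μ := (hTsq.condExp one_le_two).ae_eq hcond
  have hu : ∀ k, MemLp (fun ω => centeredInSnd ν T (X ω) (Θ k ω)) 2 μ :=
    fun k => (hTk k).sub hφX
  have hvar := integral_sq_average_eq_of_orthogonal hu
    (integral_centeredInSnd_mul_centeredInSnd hX hΘmeas hΘX hΘident hΘindep hT hu)
  rw [integral_congr_ae (g := fun ω => (Y ω - ∫ θ, T (X ω) θ ∂ν) ^ 2)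
    (by filter_upwards [hcond] with ω h; rw [h])]
  refine tendsto_integral_sq_of_tendsto_integral_sub_sq
    (fun B => hY.sub ((memLp_finsetSum _ fun k _ => hTk k).const_mul _)) (hY.sub hφX) ?_
  refine (tendsto_const_div_atTop_nhds_zero_nat
    (∫ ω, ∫ θ, centeredInSnd ν T (X ω) θ ^ 2 ∂ν ∂μ)).congr' ?_
  filter_upwards [eventually_ne_atTop 0] with B hB
  rw [← hvar B]
  congr with ω
  simp only [centeredInSnd, sum_sub_distrib, sum_const, card_range, nsmul_eq_mul]
  field_simp
  ring

/-- Breiman's random forest limit: let `(X, Y)` be a random vector with `X` valued in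
`[0,1]^d` and `Y` square integrable, `(Θ_k)` i.i.d. and independent of `(X, Y)`, and
`T : [0,1]^d × ℝ^q → ℝ` measurable with `E[T(X, Θ_1)²] < ∞`.  With
`H_B(X) = (1/B) Σ_{k=1}^B T(X, Θ_k)`, one has
`lim_{B → ∞} E[(Y − H_B(X))²] = E[(Y − E[T(X, Θ_1) | X])²]`. -/
theorem tendsto_forest_L2_error {Ω : Type*} [MeasurableSpace Ω]
    (μ : Measure Ω) [IsProbabilityMeasure μ]
    {d q : ℕ} (X : Ω → (Fin d → ℝ)) (Y : Ω → ℝ) (Θ : ℕ → Ω → (Fin q → ℝ))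
    (hX : Measurable X) (hXval : ∀ ω, X ω ∈ Set.Icc (0 : Fin d → ℝ) 1)
    (hY : MemLp Y 2 μ)
    (hΘmeas : ∀ k, Measurable (Θ k))
    (hΘindep : iIndepFun Θ μ)
    (hΘident : ∀ k, Measure.map (Θ k) μ = Measure.map (Θ 0) μ)
    (hindep : IndepFun (fun ω k => Θ k ω) (fun ω => (X ω, Y ω)) μ)
    (T : (Fin d → ℝ) → (Fin q → ℝ) → ℝ)
    (hT : Measurable fun p : (Fin d → ℝ) × (Fin q → ℝ) => T p.1 p.2)
    (hTsq : MemLp (fun ω => T (X ω) (Θ 0 ω)) 2 μ) :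
    Tendsto (fun B : ℕ => ∫ ω, (Y ω - (B : ℝ)⁻¹ * ∑ k ∈ Finset.range B, T (X ω) (Θ k ω)) ^ 2 ∂μ)
      atTop
      (nhds (∫ ω,
        (Y ω - (μ[fun ω' => T (X ω') (Θ 0 ω')|MeasurableSpace.comap X inferInstance]) ω) ^ 2 ∂μ)) :=
  tendsto_forest_L2_error_general μ X Y Θ hX hY hΘmeas hΘindep hΘident hindep T hT hTsq
end

section
/- Let (X, Y) be a random vector with X valued in [0,1]^d and Y real-valued and square-integrable, let Θ and Θ' be independent, identically distributed ℝ^q-valued random vectors, with (Θ, Θ') independent of (X, Y), and let T : [0,1]^d × ℝ^q → ℝ be a measurable function with E[T(X, Θ)²] < ∞. Then E[(Y − E[T(X, Θ) | X])²] = E[(Y − T(X, Θ))(Y − T(X, Θ'))]. -/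
/-!
Let `ν` be the law of `Θ` and `g x = ∫ T(x, θ) dν(θ)`. Since `Θ` is independent of `X`,
`E[T(X, Θ) | X] = g(X)`, so the left side is `E[(Y - g(X))²]`. Since `(X, Y)` is independent of the
i.i.d. pair `(Θ, Θ')`, the law of `((X, Y), Θ, Θ')` is `law(X, Y) ⊗ ν ⊗ ν`, and Fubini turns the
right side into `E[(∫ (Y - T(X, θ)) dν(θ))²] = E[(Y - g(X))²]`.
-/

open MeasureTheory ProbabilityTheory

section

variable {Ω α β : Type*} {mΩ : MeasurableSpace Ω} [MeasurableSpace α] [MeasurableSpace β]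
  {μ : Measure Ω} [IsFiniteMeasure μ]

theorem ProbabilityTheory.IndepFun.identDistrib_prodMk {X : Ω → α} {Θ Θ' : Ω → β}
    (hX : AEMeasurable X μ) (hΘ : AEMeasurable Θ μ) (hΘ' : AEMeasurable Θ' μ)
    (hXΘ : IndepFun X Θ μ) (hXΘ' : IndepFun X Θ' μ) (hlaw : μ.map Θ = μ.map Θ') :
    IdentDistrib (fun ω => (X ω, Θ ω)) (fun ω => (X ω, Θ' ω)) μ μ where
  aemeasurable_fst := hX.prodMk hΘ
  aemeasurable_snd := hX.prodMk hΘ'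
  map_eq := by
    rw [(indepFun_iff_map_prod_eq_prod_map_map hX hΘ).mp hXΘ,
      (indepFun_iff_map_prod_eq_prod_map_map hX hΘ').mp hXΘ', hlaw]

theorem ProbabilityTheory.IndepFun.integrable_prod_map_map {E : Type*} [NormedAddCommGroup E]
    {X : Ω → α} {Θ : Ω → β} (hX : AEMeasurable X μ) (hΘ : AEMeasurable Θ μ)
    (hXΘ : IndepFun X Θ μ) {f : α × β → E} (hf : StronglyMeasurable f)
    (hint : Integrable (fun ω => f (X ω, Θ ω)) μ) :
    Integrable f ((μ.map X).prod (μ.map Θ)) := by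
  rw [← (indepFun_iff_map_prod_eq_prod_map_map hX hΘ).mp hXΘ]
  exact (integrable_map_measure hf.aestronglyMeasurable (hX.prodMk hΘ)).mpr hint

theorem ProbabilityTheory.IndepFun.ae_integrable_comp_prodMk {E : Type*} [NormedAddCommGroup E]
    {X : Ω → α} {Θ : Ω → β} (hX : AEMeasurable X μ) (hΘ : AEMeasurable Θ μ)
    (hXΘ : IndepFun X Θ μ) {f : α × β → E} (hf : StronglyMeasurable f)
    (hint : Integrable (fun ω => f (X ω, Θ ω)) μ) :
    ∀ᵐ ω ∂μ, Integrable (fun θ => f (X ω, θ)) (μ.map Θ) :=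
  ae_of_ae_map hX (hXΘ.integrable_prod_map_map hX hΘ hf hint).prod_right_ae

theorem condExp_comp_prodMk_ae_eq_integral_of_indepFun {E : Type*} [NormedAddCommGroup E]
    [NormedSpace ℝ E] [CompleteSpace E] {X : Ω → α} {Θ : Ω → β} (hX : Measurable X)
    (hΘ : AEMeasurable Θ μ) (hXΘ : IndepFun X Θ μ) {f : α × β → E} (hf : StronglyMeasurable f)
    (hint : Integrable (fun ω => f (X ω, Θ ω)) μ) :
    μ[fun ω => f (X ω, Θ ω) | MeasurableSpace.comap X inferInstance] =ᵐ[μ]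
      fun ω => ∫ θ, f (X ω, θ) ∂(μ.map Θ) := by
  have hlaw : μ.map (fun ω => (X ω, Θ ω)) = (μ.map X).prod (μ.map Θ) :=
    (indepFun_iff_map_prod_eq_prod_map_map hX.aemeasurable hΘ).mp hXΘ
  have hf_int := hXΘ.integrable_prod_map_map hX.aemeasurable hΘ hf hint
  set g : α → E := fun x => ∫ θ, f (x, θ) ∂(μ.map Θ)
  have hg : StronglyMeasurable g := hf.integral_prod_right'
  have hg_int : Integrable (g ∘ X) μ :=
    (integrable_map_measure hg.aestronglyMeasurable hX.aemeasurable).mp hf_int.integral_prod_left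
  refine (ae_eq_condExp_of_forall_setIntegral_eq hX.comap_le hint
    (fun s _ _ => hg_int.integrableOn) ?_ ?_).symm
  · rintro s ⟨t, ht, rfl⟩ -
    calc ∫ ω in X ⁻¹' t, g (X ω) ∂μ
        = ∫ x in t, ∫ θ in Set.univ, f (x, θ) ∂(μ.map Θ) ∂(μ.map X) := by
          rw [← setIntegral_map ht hg.aestronglyMeasurable hX.aemeasurable]
          simp only [Measure.restrict_univ, g]
      _ = ∫ p in t ×ˢ Set.univ, f p ∂((μ.map X).prod (μ.map Θ)) :=
          (setIntegral_prod f hf_int.integrableOn).symm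
      _ = ∫ ω in X ⁻¹' t, f (X ω, Θ ω) ∂μ := by
          rw [← hlaw, setIntegral_map (ht.prod MeasurableSet.univ) hf.aestronglyMeasurable
            (hX.aemeasurable.prodMk hΘ)]
          simp [Set.mk_preimage_prod]
  · exact (hg.comp_measurable (Measurable.of_comap_le le_rfl)).aestronglyMeasurable

theorem integral_mul_comp_prodMk_eq_integral_sq_of_indepFun {W : Ω → α} {Θ Θ' : Ω → β}
    (hW : AEMeasurable W μ) (hΘ : AEMeasurable Θ μ) (hΘ' : AEMeasurable Θ' μ)
    (hΘΘ' : IndepFun Θ Θ' μ) (hlaw : μ.map Θ = μ.map Θ')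
    (hind : IndepFun W (fun ω => (Θ ω, Θ' ω)) μ) {h : α × β → ℝ} (hh : StronglyMeasurable h)
    (hmem : MemLp (fun ω => h (W ω, Θ ω)) 2 μ) :
    ∫ ω, h (W ω, Θ ω) * h (W ω, Θ' ω) ∂μ = ∫ ω, (∫ θ, h (W ω, θ) ∂(μ.map Θ)) ^ 2 ∂μ := by
  set ν := μ.map Θ
  have hΘΘ'_law : μ.map (fun ω => (Θ ω, Θ' ω)) = ν.prod ν := by
    rw [(indepFun_iff_map_prod_eq_prod_map_map hΘ hΘ').mp hΘΘ', ← hlaw]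
  have hWΘ : IndepFun W Θ μ := hind.comp measurable_id measurable_fst
  have hWΘ' : IndepFun W Θ' μ := hind.comp measurable_id measurable_snd
  have hmem' : MemLp (fun ω => h (W ω, Θ' ω)) 2 μ :=
    ((hWΘ.identDistrib_prodMk hW hΘ hΘ' hWΘ' hlaw).comp hh.measurable).memLp_snd hmem
  set F : α × (β × β) → ℝ := fun p => h (p.1, p.2.1) * h (p.1, p.2.2)
  have hF : StronglyMeasurable F :=
    (hh.comp_measurable (measurable_fst.prodMk (measurable_fst.comp measurable_snd))).mul
      (hh.comp_measurable (measurable_fst.prodMk (measurable_snd.comp measurable_snd)))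
  have hF_int : Integrable F ((μ.map W).prod (ν.prod ν)) := by
    rw [← hΘΘ'_law]
    exact hind.integrable_prod_map_map hW (hΘ.prodMk hΘ') hF (hmem.integrable_mul hmem')
  calc ∫ ω, h (W ω, Θ ω) * h (W ω, Θ' ω) ∂μ
      = ∫ p, F p ∂((μ.map W).prod (ν.prod ν)) := by
        rw [← hΘΘ'_law, ← (indepFun_iff_map_prod_eq_prod_map_map hW (hΘ.prodMk hΘ')).mp hind,
          integral_map (hW.prodMk (hΘ.prodMk hΘ')) hF.aestronglyMeasurable]
    _ = ∫ w, ∫ z, F (w, z) ∂(ν.prod ν) ∂(μ.map W) := integral_prod F hF_int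
    _ = ∫ w, (∫ θ, h (w, θ) ∂ν) ^ 2 ∂(μ.map W) := by
        refine integral_congr_ae (Filter.Eventually.of_forall fun w => ?_)
        exact (integral_prod_mul (fun θ => h (w, θ)) (fun θ => h (w, θ))).trans (sq _).symm
    _ = ∫ ω, (∫ θ, h (W ω, θ) ∂ν) ^ 2 ∂μ :=
        integral_map hW (hh.integral_prod_right'.pow 2).aestronglyMeasurable

end

theorem integral_sq_sub_condexp_eq_integral_mul_residuals_general {Ω : Type*} [MeasurableSpace Ω]
    (μ : Measure Ω) [IsProbabilityMeasure μ]
    {d q : ℕ} (X : Ω → (Fin d → ℝ)) (Y : Ω → ℝ) (Θ Θ' : Ω → (Fin q → ℝ))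
    (hX : Measurable X)
    (hY : MemLp Y 2 μ)
    (hΘmeas : Measurable Θ) (hΘ'meas : Measurable Θ')
    (hΘindep : IndepFun Θ Θ' μ)
    (hΘident : Measure.map Θ μ = Measure.map Θ' μ)
    (hindep : IndepFun (fun ω => (Θ ω, Θ' ω)) (fun ω => (X ω, Y ω)) μ)
    (T : (Fin d → ℝ) → (Fin q → ℝ) → ℝ)
    (hT : Measurable fun p : (Fin d → ℝ) × (Fin q → ℝ) => T p.1 p.2)
    (hTsq : MemLp (fun ω => T (X ω) (Θ ω)) 2 μ) :
    (∫ ω, (Y ω - (μ[fun ω' => T (X ω') (Θ ω')|MeasurableSpace.comap X inferInstance]) ω) ^ 2 ∂μ)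
      = ∫ ω, (Y ω - T (X ω) (Θ ω)) * (Y ω - T (X ω) (Θ' ω)) ∂μ := by
  have : IsProbabilityMeasure (μ.map Θ) := Measure.isProbabilityMeasure_map hΘmeas.aemeasurable
  have hXΘ : IndepFun X Θ μ := (hindep.comp measurable_fst measurable_fst).symm
  have hTint := hTsq.integrable one_le_two
  have hcond := condExp_comp_prodMk_ae_eq_integral_of_indepFun hX hΘmeas.aemeasurable hXΘ
    hT.stronglyMeasurable hTint
  have hsec := hXΘ.ae_integrable_comp_prodMk hX.aemeasurable hΘmeas.aemeasurable
    hT.stronglyMeasurable hTint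
  have hcross := integral_mul_comp_prodMk_eq_integral_sq_of_indepFun
    (hX.aemeasurable.prodMk hY.aestronglyMeasurable.aemeasurable) hΘmeas.aemeasurable
    hΘ'meas.aemeasurable hΘindep hΘident hindep.symm (h := fun p => p.1.2 - T p.1.1 p.2)
    ((measurable_snd.comp measurable_fst).sub
      (hT.comp ((measurable_fst.comp measurable_fst).prodMk measurable_snd))).stronglyMeasurable
    (hY.sub hTsq)
  simp only at hcond hsec hcross
  rw [hcross]
  refine integral_congr_ae ?_
  filter_upwards [hcond, hsec] with ω hω hi
  rw [hω, integral_sub (integrable_const _) hi, integral_const, probReal_univ, one_smul]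

/-- Let `(X, Y)` be a random vector with `X` valued in `[0,1]^d` and `Y` square integrable,
`Θ, Θ'` i.i.d. with `(Θ, Θ')` independent of `(X, Y)`, and `T` measurable with
`E[T(X, Θ)²] < ∞`.  Then `E[(Y − E[T(X, Θ) | X])²] = E[(Y − T(X, Θ))(Y − T(X, Θ'))]`. -/
theorem integral_sq_sub_condexp_eq_integral_mul_residuals {Ω : Type*} [MeasurableSpace Ω]
    (μ : Measure Ω) [IsProbabilityMeasure μ]
    {d q : ℕ} (X : Ω → (Fin d → ℝ)) (Y : Ω → ℝ) (Θ Θ' : Ω → (Fin q → ℝ))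
    (hX : Measurable X) (hXval : ∀ ω, X ω ∈ Set.Icc (0 : Fin d → ℝ) 1)
    (hY : MemLp Y 2 μ)
    (hΘmeas : Measurable Θ) (hΘ'meas : Measurable Θ')
    (hΘindep : IndepFun Θ Θ' μ)
    (hΘident : Measure.map Θ μ = Measure.map Θ' μ)
    (hindep : IndepFun (fun ω => (Θ ω, Θ' ω)) (fun ω => (X ω, Y ω)) μ)
    (T : (Fin d → ℝ) → (Fin q → ℝ) → ℝ)
    (hT : Measurable fun p : (Fin d → ℝ) × (Fin q → ℝ) => T p.1 p.2)
    (hTsq : MemLp (fun ω => T (X ω) (Θ ω)) 2 μ) :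
    (∫ ω, (Y ω - (μ[fun ω' => T (X ω') (Θ ω')|MeasurableSpace.comap X inferInstance]) ω) ^ 2 ∂μ)
      = ∫ ω, (Y ω - T (X ω) (Θ ω)) * (Y ω - T (X ω) (Θ' ω)) ∂μ :=
  integral_sq_sub_condexp_eq_integral_mul_residuals_general μ X Y Θ Θ' hX hY hΘmeas hΘ'meas hΘindep
    hΘident hindep T hT hTsq
end
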